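/- arXiv:2304.14242 — 14 statements merged into one kernel-verified Lean document; each statement's English description precedes it below -/
import Mathlib

section
/- Let q be a prime power, n a positive integer, and L(x) = ∑_{i=0}^{n-1} a_i x^{q^i} a q-linear polynomial over F_{q^n} with transpose L′(x) = ∑_{i=0}^{n-1} (a_i x)^{q^{n-i}}. If the map x ↦ L(x)·x^{-(q+1)} (where x^{-1} denotes x^{q^n-2}, so 0 maps to 0) is a bijection of F_{q^n}, then the map x ↦ L′(x^{q+1})·x^{-1} is also a bijection of F_{q^n}. -/
open Finset

section Aux

variable {F : Type*} [Field F] [Fintype F]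

/-- An additive character maps finite sums to products. -/
lemma addChar_map_sum {R : Type*} [CommMonoid R] (ψ : AddChar F R) {ι : Type*} (s : Finset ι)
    (t : ι → F) : ψ (∑ i ∈ s, t i) = ∏ i ∈ s, ψ (t i) := by
  classical
  induction s using Finset.cons_induction with
  | empty => simp
  | cons i s hi ih => rw [Finset.sum_cons, AddChar.map_add_eq_mul, ih, Finset.prod_cons]

/-- If `f` is bijective then twisted character sums vanish. -/
lemma charSum_eq_zero_of_bijective {R : Type*} [CommRing R] [IsDomain R]
    {ψ : AddChar F R} (hψ : ψ ≠ 1) {f : F → F} (hf : Function.Bijective f)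
    {c : F} (hc : c ≠ 0) : ∑ x : F, ψ (c * f x) = 0 := by
  have h1 : ∑ x : F, ψ (c * f x) = ∑ x : F, ψ (c * x) :=
    Fintype.sum_bijective f hf _ _ (fun x => rfl)
  have h2 : ∑ x : F, ψ (c * x) = ∑ x : F, (AddChar.mulShift ψ c) x := by
    simp [AddChar.mulShift_apply]
  rw [h1, h2]
  exact AddChar.sum_eq_zero_of_ne_one (AddChar.IsPrimitive.of_ne_one hψ hc)

/-- Converse: if all twisted character sums vanish, `f` is bijective. -/
lemma bijective_of_charSum {R : Type*} [CommRing R] [IsDomain R] [CharZero R]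
    {ψ : AddChar F R} (hψ : ψ ≠ 1) (f : F → F)
    (H : ∀ c : F, c ≠ 0 → ∑ x : F, ψ (c * f x) = 0) : Function.Bijective f := by
  classical
  have hprim : AddChar.IsPrimitive ψ := AddChar.IsPrimitive.of_ne_one hψ
  have key : ∀ y : F, (Finset.univ.filter fun x => f x = y).card = 1 := by
    intro y
    have hds : ∑ x : F, ∑ c : F, ψ (c * (f x - y)) =
        ((Finset.univ.filter fun x => f x = y).card : R) * (Fintype.card F : R) := by
      have : ∀ x : F, ∑ c : F, ψ (c * (f x - y)) =
          if f x = y then (Fintype.card F : R) else 0 := by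
        intro x
        rw [AddChar.sum_mulShift (R := F) (R' := R) (f x - y) hprim]
        by_cases hxy : f x = y
        · rw [if_pos (sub_eq_zero_of_eq hxy), if_pos hxy]
        · rw [if_neg (sub_ne_zero.mpr hxy), if_neg hxy, Nat.cast_zero]
      rw [Finset.sum_congr rfl fun x _ => this x, ← Finset.sum_filter,
        Finset.sum_const, nsmul_eq_mul]
    have hds2 : ∑ c : F, ∑ x : F, ψ (c * (f x - y)) = (Fintype.card F : R) := by
      have hterm : ∀ c : F, c ≠ 0 → ∑ x : F, ψ (c * (f x - y)) = 0 := by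
        intro c hc
        have : ∀ x : F, ψ (c * (f x - y)) = ψ (c * f x) * ψ (-(c * y)) := by
          intro x
          rw [← AddChar.map_add_eq_mul]
          ring_nf
        rw [Finset.sum_congr rfl fun x _ => this x, ← Finset.sum_mul, H c hc, zero_mul]
      rw [Finset.sum_eq_single_of_mem (0 : F) (Finset.mem_univ 0)
        (fun c _ hc => hterm c hc)]
      simp
    rw [Finset.sum_comm] at hds
    rw [hds2] at hds
    have hcard0 : (Fintype.card F : R) ≠ 0 := by
      exact_mod_cast Nat.cast_ne_zero.mpr Fintype.card_ne_zero
    have h1 : ((Finset.univ.filter fun x => f x = y).card : R) * (Fintype.card F : R) =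
        1 * (Fintype.card F : R) := by rw [one_mul]; exact hds.symm
    have h2 := mul_right_cancel₀ hcard0 h1
    exact_mod_cast h2
  rw [Function.bijective_iff_existsUnique]
  intro y
  obtain ⟨x, hx⟩ := Finset.card_eq_one.mp (key y)
  have hxmem : x ∈ Finset.univ.filter fun z => f z = y := by rw [hx]; exact Finset.mem_singleton_self x
  refine ⟨x, (Finset.mem_filter.mp hxmem).2, fun z hz => ?_⟩
  have : z ∈ Finset.univ.filter fun w => f w = y := Finset.mem_filter.mpr ⟨Finset.mem_univ z, hz⟩
  rw [hx, Finset.mem_singleton] at this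
  exact this

/-- Existence of a nontrivial Frobenius-invariant additive character on a finite field. -/
lemma exists_invariant_char (p : ℕ) [hp : Fact p.Prime] [CharP F p] :
    ∃ ψ : AddChar F ℂ, ψ ≠ 1 ∧ ∀ z : F, ψ (z ^ p) = ψ z := by
  letI : Algebra (ZMod p) F := ZMod.algebra _ _
  haveI : NeZero p := ⟨hp.out.ne_zero⟩
  have hprim : IsPrimitiveRoot (Complex.exp (2 * Real.pi * Complex.I / p)) p :=
    Complex.isPrimitiveRoot_exp p hp.out.ne_zero
  have hζ : (Complex.exp (2 * Real.pi * Complex.I / p)) ^ p = 1 := hprim.pow_eq_one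
  let ψ₀ : AddChar (ZMod p) ℂ := AddChar.zmodChar p hζ
  have hψ₀prim : AddChar.IsPrimitive ψ₀ := by
    have := AddChar.zmodChar_primitive_of_primitive_root p hprim
    exact this
  let ψ : AddChar F ℂ := ψ₀.compAddMonoidHom (Algebra.trace (ZMod p) F).toAddMonoidHom
  -- trace invariance under Frobenius
  have hfrob : ∀ z : F, Algebra.trace (ZMod p) F (z ^ p) = Algebra.trace (ZMod p) F z := by
    have hbij : Function.Bijective (frobenius F p) :=
      ⟨frobenius_inj F p, Finite.surjective_of_injective (frobenius_inj F p)⟩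
    let e : F ≃ₐ[ZMod p] F :=
      AlgEquiv.ofBijective
        { toRingHom := frobenius F p
          commutes' := fun c => by
            show frobenius F p ((algebraMap (ZMod p) F) c) = (algebraMap (ZMod p) F) c
            rw [frobenius_def, ← map_pow, ZMod.pow_card] } hbij
    intro z
    have := Algebra.trace_eq_of_algEquiv e z
    simpa [e, frobenius_def] using this
  refine ⟨ψ, ?_, fun z => by simp only [ψ, AddChar.compAddMonoidHom_apply,
    AddMonoidHom.coe_coe, LinearMap.toAddMonoidHom_coe, hfrob]⟩
  -- nontriviality
  have h1 : ∃ b : F, Algebra.trace (ZMod p) F b ≠ 0 := by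
    have htr := traceForm_nondegenerate (ZMod p) F
    by_contra! hf
    have : (1 : F) = 0 := by
      apply htr.1 1
      intro b
      rw [Algebra.traceForm_apply, one_mul]
      exact hf b
    exact one_ne_zero this
  obtain ⟨b, hb⟩ := h1
  rw [AddChar.ne_one_iff]
  refine ⟨b, fun hfb => hb ?_⟩
  have : ψ₀ (Algebra.trace (ZMod p) F b) = 1 := hfb
  exact (hψ₀prim.zmod_char_eq_one_iff p _).mp this

end Aux

/-- If `x ↦ L(x)·x^{-(q+1)}` is a bijection of `F_{q^n}`, then so is
`x ↦ L′(x^{q+1})·x^{-1}`, where `L′` is the transpose of the `q`-linear polynomial `L`. -/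
theorem stmt_0 (q n : ℕ) (hq : IsPrimePow q) (hn : 0 < n)
    (F : Type*) [Field F] [Fintype F] (hF : Fintype.card F = q ^ n)
    (a : ℕ → F)
    (L : F → F) (hL : ∀ x, L x = ∑ i ∈ Finset.range n, a i * x ^ q ^ i)
    (L' : F → F) (hL' : ∀ x, L' x = ∑ i ∈ Finset.range n, (a i * x) ^ q ^ (n - i))
    (h : Function.Bijective fun x : F => L x * (x⁻¹) ^ (q + 1)) :
    Function.Bijective fun x : F => L' (x ^ (q + 1)) * x⁻¹ := by
  classical
  obtain ⟨p, e, hp, he, rfl⟩ := hq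
  have hpnat : p.Prime := Nat.prime_iff.mpr hp
  haveI : Fact p.Prime := ⟨hpnat⟩
  -- characteristic of F is p
  have hcharp : CharP F p := by
    have hcard : ((Fintype.card F : ℕ) : F) = 0 := FiniteField.cast_card_eq_zero F
    have : (p : F) = 0 := by
      have hen : e * n ≠ 0 := Nat.mul_ne_zero he.ne' hn.ne'
      have h0 : ((p : F)) ^ (e * n) = 0 := by
        rw [hF] at hcard
        push_cast at hcard
        rw [← pow_mul] at hcard
        exact hcard
      exact pow_eq_zero_iff hen |>.mp h0
    exact (CharP.charP_iff_prime_eq_zero hpnat).mpr this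
  haveI := hcharp
  obtain ⟨ψ, hψne, hψp⟩ := exists_invariant_char (F := F) p
  -- invariance under powers of Frobenius
  have hψpow : ∀ (m : ℕ) (z : F), ψ (z ^ p ^ m) = ψ z := by
    intro m
    induction m with
    | zero => intro z; simp
    | succ m ih =>
      intro z
      rw [pow_succ, pow_mul, hψp, ih]
  have hψq : ∀ (i : ℕ) (z : F), ψ (z ^ (p ^ e) ^ i) = ψ z := by
    intro i z
    have hpe : (p ^ e) ^ i = p ^ (e * i) := (pow_mul p e i).symm
    rw [hpe]
    exact hψpow (e * i) z
  -- every element satisfies z ^ q ^ n = z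
  have hQ : ∀ z : F, z ^ (p ^ e) ^ n = z := by
    intro z
    have := FiniteField.pow_card z
    rwa [hF] at this
  -- adjoint identity
  set q := p ^ e with hqdef
  have key : ∀ y u : F, ψ (y * L' u) = ψ (u * L y) := by
    intro y u
    rw [hL' u, hL y, Finset.mul_sum, Finset.mul_sum, addChar_map_sum, addChar_map_sum]
    refine Finset.prod_congr rfl fun i hi => ?_
    have hi' : i < n := Finset.mem_range.mp hi
    have step1 : ψ (y * (a i * u) ^ q ^ (n - i)) =
        ψ ((y * (a i * u) ^ q ^ (n - i)) ^ q ^ i) := (hψq i _).symm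
    rw [step1]
    have hexp : q ^ (n - i) * q ^ i = q ^ n := by
      rw [← pow_add, Nat.sub_add_cancel hi'.le]
    have harg : (y * (a i * u) ^ q ^ (n - i)) ^ q ^ i = u * (a i * y ^ q ^ i) := by
      rw [mul_pow, ← pow_mul (a i * u) (q ^ (n - i)) (q ^ i), hexp, hQ]
      ring
    rw [harg]
  -- the maps
  set f : F → F := fun x => L x * (x⁻¹) ^ (q + 1) with hfdef
  set g : F → F := fun x => L' (x ^ (q + 1)) * x⁻¹ with hgdef
  -- conclude via character sums
  apply bijective_of_charSum hψne
  intro c hc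
  -- the involution x ↦ c * x⁻¹
  have hσinv : Function.Involutive (fun x : F => c * x⁻¹) := by
    intro x
    by_cases hx : x = 0
    · simp [hx]
    · field_simp
  have hpt : ∀ x : F, ψ (c * g x) = ψ (c ^ (q + 1) * f (c * x⁻¹)) := by
    intro x
    by_cases hx : x = 0
    · have h1 : c * g 0 = 0 := by
        simp [hgdef, zero_pow (Nat.succ_ne_zero q)]
      have h2 : c ^ (q + 1) * f (c * (0 : F)⁻¹) = 0 := by
        simp [hfdef, zero_pow (Nat.succ_ne_zero q)]
      rw [hx, h1]
      rw [show (0:F)⁻¹ = 0 from inv_zero] at h2 ⊢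
      rw [h2]
    · have harg1 : c * g x = (c * x⁻¹) * L' (x ^ (q + 1)) := by
        simp only [hgdef]; ring
      have harg2 : c ^ (q + 1) * f (c * x⁻¹) = x ^ (q + 1) * L (c * x⁻¹) := by
        simp only [hfdef]
        rw [mul_inv, inv_inv, mul_pow]
        have hcc : c ^ (q + 1) * (c⁻¹) ^ (q + 1) = 1 := by
          rw [← mul_pow, mul_inv_cancel₀ hc, one_pow]
        calc c ^ (q + 1) * (L (c * x⁻¹) * ((c⁻¹) ^ (q + 1) * x ^ (q + 1)))
            = (c ^ (q + 1) * (c⁻¹) ^ (q + 1)) * (x ^ (q + 1) * L (c * x⁻¹)) := by ring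
          _ = x ^ (q + 1) * L (c * x⁻¹) := by rw [hcc, one_mul]
      rw [harg1, harg2]
      exact key (c * x⁻¹) (x ^ (q + 1))
  calc ∑ x : F, ψ (c * g x) = ∑ x : F, ψ (c ^ (q + 1) * f (c * x⁻¹)) :=
        Finset.sum_congr rfl fun x _ => hpt x
    _ = ∑ x : F, ψ (c ^ (q + 1) * f x) :=
        Fintype.sum_bijective (fun x : F => c * x⁻¹) hσinv.bijective
          (fun x => ψ (c ^ (q + 1) * f (c * x⁻¹))) (fun x => ψ (c ^ (q + 1) * f x))
          (fun x => rfl)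
    _ = 0 := charSum_eq_zero_of_bijective hψne h (pow_ne_zero _ hc)
end

section
/- Let q be a prime power, n an odd positive integer, and L(x) = ∑_{i=0}^{n-1} a_i x^{q^i} a q-linear polynomial over F_{q^n} with transpose L′(x) = ∑_{i=0}^{n-1} (a_i x)^{q^{n-i}}. If the map x ↦ L′(x^{q+1})·x^{-1} (where x^{-1} denotes x^{q^n-2}, so 0 maps to 0) is a bijection of F_{q^n}, then the map x ↦ L(x)·x^{-(q+1)} is also a bijection of F_{q^n}. -/
open Finset

private lemma addchar_map_sum {A M : Type*} [AddCommMonoid A] [CommMonoid M] (χ : AddChar A M)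
    {ι : Type*} (s : Finset ι) (f : ι → A) : χ (∑ i ∈ s, f i) = ∏ i ∈ s, χ (f i) := by
  classical
  induction s using Finset.induction with
  | empty => simp
  | @insert _ _ hi ih =>
    rw [Finset.sum_insert hi, Finset.prod_insert hi, AddChar.map_add_eq_mul, ih]

private lemma pow_gcd_surj {G : Type*} [Group G] [Fintype G] (t : G) (k : ℕ) :
    ∃ s : G, s ^ k = t ^ (Nat.gcd k (Fintype.card G)) := by
  refine ⟨t ^ (Nat.gcdA k (Fintype.card G)), ?_⟩
  have hb : (t : G) ^ ((Fintype.card G : ℤ)) = 1 := by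
    rw [zpow_natCast]; exact pow_card_eq_one
  have hg := Nat.gcd_eq_gcd_ab k (Fintype.card G)
  rw [← zpow_natCast (t ^ (Nat.gcdA k (Fintype.card G))) k, ← zpow_mul, ← zpow_natCast t,
    hg, zpow_add, mul_comm (k : ℤ), zpow_mul, zpow_mul, hb, one_zpow, mul_one]

private lemma decomp {F : Type*} [Field F] [Fintype F] (q n : ℕ) (hq2 : 2 ≤ q) (hn : Odd n)
    (hF : Fintype.card F = q ^ n) :
    ∀ b : F, b ≠ 0 → ∃ ν s : F, ν ^ q = ν ∧ s ≠ 0 ∧ b = ν * s ^ (q + 1) := by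
  classical
  intro b hb
  have hnodd2 : n % 2 = 1 := Nat.odd_iff.mp hn
  have hq1 : 1 ≤ q := le_trans (by norm_num) hq2
  have hqn1 : 1 ≤ q ^ n := Nat.one_le_pow _ _ (by omega)
  set N := Fintype.card Fˣ with hN
  have hNcard : N = q ^ n - 1 := by rw [hN, Fintype.card_units, hF]
  set m := Nat.gcd (q + 1) N with hm
  have B : ∀ t : Fˣ, ∃ s : Fˣ, s ^ (q + 1) = t ^ m := fun t => pow_gcd_surj t (q + 1)
  have hdvd1 : (q + 1) ∣ q ^ n + 1 := by
    have h : ((q : ℤ) + 1) ∣ (q : ℤ) ^ n + 1 := by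
      have := sub_dvd_pow_sub_pow (q : ℤ) (-1) n
      rwa [sub_neg_eq_add, hn.neg_one_pow, sub_neg_eq_add] at this
    exact_mod_cast h
  have hm2 : m ∣ 2 := by
    have h1 : m ∣ q ^ n + 1 := dvd_trans (Nat.gcd_dvd_left _ _) hdvd1
    have h2 : m ∣ q ^ n - 1 := hNcard ▸ Nat.gcd_dvd_right _ _
    have := Nat.dvd_sub h1 h2
    have heq : q ^ n + 1 - (q ^ n - 1) = 2 := by omega
    rwa [heq] at this
  rcases (Nat.dvd_prime Nat.prime_two).mp hm2 with hm1 | hm2'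
  · obtain ⟨s, hs⟩ := B (Units.mk0 b hb)
    refine ⟨1, (s : F), one_pow q, s.ne_zero, ?_⟩
    rw [hm1, pow_one] at hs
    rw [one_mul, ← Units.val_pow_eq_pow_val, hs, Units.val_mk0]
  · have hq1m : 2 ∣ q + 1 := hm2' ▸ Nat.gcd_dvd_left _ _
    have hqodd : q % 2 = 1 := by omega
    have hqnodd : q ^ n % 2 = 1 := Nat.odd_iff.mp (Odd.pow (Nat.odd_iff.mpr hqodd))
    have hchar2 : ringChar F ≠ 2 := by
      intro h2
      obtain ⟨mm, hmp, hcard⟩ := FiniteField.card F (ringChar F)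
      rw [h2, hF] at hcard
      have h2d : (2 : ℕ) ∣ q ^ n := by rw [hcard]; exact dvd_pow_self 2 mm.pos.ne'
      omega
    have hNeven : 2 ∣ N := by rw [hNcard]; omega
    set M := N / 2 with hM
    have hMN : 2 * M = N := Nat.two_mul_div_two_of_even (even_iff_two_dvd.mpr hNeven)
    have hcard2 : Fintype.card F / 2 = M := by
      have hcardN : Fintype.card F = N + 1 := by rw [hF, hNcard]; omega
      omega
    have hN2 : 2 ≤ N := by
      have h3 : 3 ≤ q := by omega
      have : 3 ≤ q ^ n := le_trans h3 (Nat.le_self_pow (by omega : n ≠ 0) q)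
      omega
    have Esq : ∀ c : F, c ≠ 0 → c ^ M = 1 → ∃ s : F, s ≠ 0 ∧ c = s ^ (q + 1) := by
      intro c hc hcM
      have hsq : IsSquare c := by
        rw [FiniteField.isSquare_iff hchar2 hc, hcard2]; exact hcM
      obtain ⟨t, ht⟩ := hsq
      have htne : t ≠ 0 := by rintro rfl; rw [mul_zero] at ht; exact hc ht
      obtain ⟨s, hs⟩ := B (Units.mk0 t htne)
      rw [hm2'] at hs
      refine ⟨(s : F), s.ne_zero, ?_⟩
      have hv : ((s ^ (q + 1) : Fˣ) : F) = ((Units.mk0 t htne ^ 2 : Fˣ) : F) := by rw [hs]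
      rw [Units.val_pow_eq_pow_val, Units.val_pow_eq_pow_val, Units.val_mk0] at hv
      rw [ht, ← pow_two, hv]
    obtain ⟨γ, hγ⟩ := IsCyclic.exists_generator (α := Fˣ)
    have horder : orderOf γ = N := by
      rw [orderOf_eq_card_of_forall_mem_zpowers hγ, Nat.card_eq_fintype_card]
    have hγne : (γ : F) ≠ 0 := γ.ne_zero
    have hγN : (γ : F) ^ N = 1 := by
      rw [hNcard, ← hF]; exact FiniteField.pow_card_sub_one_eq_one _ hγne
    have hγM : (γ : F) ^ M = -1 := by
      have hsq1 : ((γ : F) ^ M) * ((γ : F) ^ M) = 1 := by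
        rw [← pow_add, ← two_mul, hMN, hγN]
      rcases mul_self_eq_one_iff.mp hsq1 with h1 | h1
      · exfalso
        have hu1 : γ ^ M = 1 := by
          ext; rw [Units.val_pow_eq_pow_val, h1, Units.val_one]
        have hdvd : N ∣ M := horder ▸ orderOf_dvd_of_pow_eq_one hu1
        have := Nat.le_of_dvd (by omega) hdvd
        omega
      · exact h1
    set d := ∑ i ∈ Finset.range n, q ^ i with hd
    have hdodd : d % 2 = 1 := by
      have h1 : d % 2 = (∑ i ∈ Finset.range n, q ^ i % 2) % 2 := Finset.sum_nat_mod _ _ _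
      have h2 : ∀ i ∈ Finset.range n, q ^ i % 2 = 1 := fun i _ =>
        Nat.odd_iff.mp ((Nat.odd_iff.mpr hqodd).pow)
      rw [Finset.sum_congr rfl h2, Finset.sum_const, Finset.card_range, smul_eq_mul, mul_one] at h1
      rw [h1, hnodd2]
    have hdN : (q - 1) * d = N := by
      have h : ((q : ℤ) - 1) * (∑ i ∈ Finset.range n, (q : ℤ) ^ i) = (q : ℤ) ^ n - 1 := by
        rw [mul_comm]; exact geom_sum_mul (q : ℤ) n
      have hZ : ((q - 1 : ℕ) : ℤ) * ((d : ℕ) : ℤ) = ((q ^ n - 1 : ℕ) : ℤ) := by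
        rw [Nat.cast_sub hq1, Nat.cast_sub hqn1]
        push_cast [hd]
        linarith [h]
      rw [hNcard]
      exact_mod_cast hZ
    set ν := (γ : F) ^ d with hν
    have hνq : ν ^ q = ν := by
      have hν1 : ν ^ (q - 1) = 1 := by
        rw [hν, ← pow_mul, mul_comm d (q - 1), hdN, hγN]
      calc ν ^ q = ν ^ (q - 1) * ν := by
            conv_lhs => rw [show q = (q - 1) + 1 by omega]
            rw [pow_succ]
        _ = ν := by rw [hν1, one_mul]
    have hνM : ν ^ M = -1 := by
      rw [hν, ← pow_mul, mul_comm d M, pow_mul, hγM]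
      exact Odd.neg_one_pow (Nat.odd_iff.mpr hdodd)
    have hνne : ν ≠ 0 := pow_ne_zero _ hγne
    have hbN : b ^ N = 1 := by
      rw [hNcard, ← hF]; exact FiniteField.pow_card_sub_one_eq_one _ hb
    have hbM2 : (b ^ M) * (b ^ M) = 1 := by rw [← pow_add, ← two_mul, hMN, hbN]
    rcases mul_self_eq_one_iff.mp hbM2 with h1 | h1
    · obtain ⟨s, hs, hseq⟩ := Esq b hb h1
      exact ⟨1, s, one_pow q, hs, by rw [one_mul, hseq]⟩
    · have hcM : (b * ν⁻¹) ^ M = 1 := by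
        rw [mul_pow, h1, inv_pow, hνM]
        simp
      have hcne : b * ν⁻¹ ≠ 0 := mul_ne_zero hb (inv_ne_zero hνne)
      obtain ⟨s, hs, hseq⟩ := Esq _ hcne hcM
      refine ⟨ν, s, hνq, hs, ?_⟩
      rw [← hseq]
      field_simp


private lemma exists_char (F : Type*) [Field F] [Fintype F] :
    ∃ (K : Type) (_ : Field K) (_ : CharZero K) (χ : AddChar F K),
      (∀ z : F, z ≠ 0 → ∑ b : F, χ (b * z) = 0) ∧
      (∀ w : F, χ (w ^ (ringChar F)) = χ w) := by
  classical
  set p := ringChar F with hp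
  haveI hFp : Fact p.Prime := ⟨CharP.char_is_prime F p⟩
  letI : Algebra (ZMod p) F := ZMod.algebra F p
  let T : F →+ ZMod p := (Algebra.trace (ZMod p) F).toAddMonoidHom
  have key : ∀ x : F, Algebra.trace (ZMod p) F (x ^ p) = Algebra.trace (ZMod p) F x := by
    let fr : F →ₐ[ZMod p] F :=
      { toRingHom := frobenius F p,
        commutes' := fun r => by
          show frobenius F p (algebraMap (ZMod p) F r) = algebraMap (ZMod p) F r
          rw [frobenius_def, ← map_pow, ZMod.pow_card] }
    have hfrbij : Function.Bijective fr :=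
      (Finite.injective_iff_bijective).mp fr.toRingHom.injective
    let e : F ≃ₐ[ZMod p] F := AlgEquiv.ofBijective fr hfrbij
    intro x
    have := Algebra.trace_eq_of_algEquiv e x
    simpa [e, fr, frobenius_def] using this
  let pp : ℕ+ := ⟨p, hFp.out.pos⟩
  have hpc : ((pp : ℕ) : ℂ) ≠ 0 := Nat.cast_ne_zero.mpr hFp.out.ne_zero
  let Ψ := AddChar.primitiveZModChar pp ℂ hpc
  set K := CyclotomicField Ψ.n ℂ with hK
  haveI : CharZero K := charZero_of_injective_algebraMap (algebraMap ℂ K).injective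
  let χ : AddChar F K := Ψ.char.compAddMonoidHom T
  have hΨne : ∀ t : ZMod p, t ≠ 0 → Ψ.char t ≠ 1 := by
    intro t ht hone
    exact ht ((AddChar.IsPrimitive.zmod_char_eq_one_iff pp Ψ.prim t).mp hone)
  have hχne : χ ≠ 0 := by
    obtain ⟨b0, hb0⟩ := FiniteField.trace_to_zmod_nondegenerate F (one_ne_zero (α := F))
    rw [one_mul] at hb0
    rw [AddChar.ne_zero_iff]
    exact ⟨b0, hΨne _ hb0⟩
  have hsum : ∑ x : F, χ x = 0 := AddChar.sum_eq_zero_iff_ne_zero.mpr hχne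
  refine ⟨K, inferInstance, inferInstance, χ, ?_, ?_⟩
  · intro z hz
    rw [← hsum]
    exact Fintype.sum_bijective (fun b : F => b * z)
      (mulRight_bijective₀ z hz) _ _ (fun b => rfl)
  · intro w
    show Ψ.char (T (w ^ p)) = Ψ.char (T w)
    congr 1
    exact key w

/-- For odd `n`, if `x ↦ L′(x^{q+1})·x^{-1}` is a bijection of `F_{q^n}`,
then so is `x ↦ L(x)·x^{-(q+1)}`. -/
theorem stmt_1 (q n : ℕ) (hq : IsPrimePow q) (hn : Odd n)
    (F : Type*) [Field F] [Fintype F] (hF : Fintype.card F = q ^ n)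
    (a : ℕ → F)
    (L : F → F) (hL : ∀ x, L x = ∑ i ∈ Finset.range n, a i * x ^ q ^ i)
    (L' : F → F) (hL' : ∀ x, L' x = ∑ i ∈ Finset.range n, (a i * x) ^ q ^ (n - i))
    (h : Function.Bijective fun x : F => L' (x ^ (q + 1)) * x⁻¹) :
    Function.Bijective fun x : F => L x * (x⁻¹) ^ (q + 1) := by
  classical
  have hq2 : 2 ≤ q := hq.two_le
  have hnodd2 : n % 2 = 1 := Nat.odd_iff.mp hn
  -- characteristic
  obtain ⟨p0, e0, hp0, he0, hq0⟩ := hq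
  have hp0' : Nat.Prime p0 := hp0.nat_prime
  set p := ringChar F with hp
  haveI hFp : Fact p.Prime := ⟨CharP.char_is_prime F p⟩
  obtain ⟨mm, hmp, hcard⟩ := FiniteField.card F p
  have hpp0 : p = p0 := by
    have h1 : p ∣ q ^ n := by
      rw [← hF, hcard]; exact dvd_pow_self p mm.pos.ne'
    have h2 : p ∣ p0 ^ (e0 * n) := by
      rwa [pow_mul, hq0]
    have h3 : p ∣ p0 := hFp.out.dvd_of_dvd_pow h2
    exact (Nat.prime_dvd_prime_iff_eq hFp.out hp0').mp h3
  have hqp : q = p ^ e0 := by rw [hpp0, hq0]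
  -- the character
  obtain ⟨K, _K1, _K2, χ, O1, hfrob1⟩ := exists_char F
  rw [← hp] at hfrob1
  -- Frobenius invariance of χ with q-powers
  have htrp : ∀ (m : ℕ) (w : F), χ (w ^ p ^ m) = χ w := by
    intro m
    induction m with
    | zero => intro w; rw [pow_zero, pow_one]
    | succ m ih =>
      intro w
      have hw : w ^ p ^ (m + 1) = (w ^ p ^ m) ^ p := by
        rw [← pow_mul, pow_succ]
      rw [hw, hfrob1, ih]
  have hχfrob : ∀ (w : F) (k : ℕ), χ (w ^ q ^ k) = χ w := by
    intro w k
    have hqk : q ^ k = p ^ (e0 * k) := by rw [hqp, ← pow_mul]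
    rw [hqk]
    exact htrp (e0 * k) w
  -- adjoint identity
  have adj : ∀ u v : F, χ (u * L v) = χ (L' u * v) := by
    intro u v
    rw [hL v, hL' u, Finset.mul_sum, Finset.sum_mul, addchar_map_sum, addchar_map_sum]
    refine Finset.prod_congr rfl (fun i hi => ?_)
    have hin : i ≤ n := le_of_lt (Finset.mem_range.mp hi)
    have hvc : v ^ q ^ n = v := by rw [← hF]; exact FiniteField.pow_card v
    have hexp : (u * (a i * v ^ q ^ i)) ^ q ^ (n - i) = (a i * u) ^ q ^ (n - i) * v := by
      have hv2 : (v ^ q ^ i) ^ q ^ (n - i) = v := by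
        rw [← pow_mul, ← pow_add, Nat.add_sub_cancel' hin, hvc]
      calc (u * (a i * v ^ q ^ i)) ^ q ^ (n - i)
          = u ^ q ^ (n - i) * ((a i) ^ q ^ (n - i) * ((v ^ q ^ i) ^ q ^ (n - i))) := by
            rw [mul_pow, mul_pow]
        _ = u ^ q ^ (n - i) * ((a i) ^ q ^ (n - i) * v) := by rw [hv2]
        _ = (a i * u) ^ q ^ (n - i) * v := by rw [mul_pow]; ring
    rw [← hexp, hχfrob]
  -- the sum transform
  set f : F → F := fun x => L x * (x⁻¹) ^ (q + 1) with hf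
  have hstep1 : ∀ b : F, ∑ x : F, χ (b * f x) = ∑ y : F, χ (L' (b * y ^ (q + 1)) * y⁻¹) := by
    intro b
    have hbij : Function.Bijective (fun y : F => y⁻¹) :=
      Function.Involutive.bijective (fun y : F => inv_inv y)
    have h1 : ∑ x : F, χ (b * f x) = ∑ y : F, χ (b * f y⁻¹) :=
      (hbij.sum_comp (fun x => χ (b * f x))).symm
    rw [h1]
    refine Finset.sum_congr rfl (fun y _ => ?_)
    have h2 : b * f y⁻¹ = (b * y ^ (q + 1)) * L y⁻¹ := by
      rw [hf]
      simp only [inv_inv]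
      ring
    rw [h2, adj]
  -- character sums of f vanish
  have hS : ∀ b : F, b ≠ 0 → ∑ x : F, χ (b * f x) = 0 := by
    intro b hb
    rw [hstep1 b]
    obtain ⟨ν, s, hνq, hs, hbeq⟩ := decomp q n hq2 hn hF b hb
    have hν0 : ν ≠ 0 := by
      intro h0
      exact hb (by rw [hbeq, h0, zero_mul])
    have hνs : ν * s ≠ 0 := mul_ne_zero hν0 hs
    have hνpow : ∀ k : ℕ, ν ^ q ^ k = ν := by
      intro k
      induction k with
      | zero => rw [pow_zero, pow_one]
      | succ k ih => rw [pow_succ, pow_mul, ih, hνq]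
    have hLsc : ∀ w : F, L' (ν * w) = ν * L' w := by
      intro w
      rw [hL', hL', Finset.mul_sum]
      refine Finset.sum_congr rfl (fun i hi => ?_)
      calc (a i * (ν * w)) ^ q ^ (n - i)
          = (ν * (a i * w)) ^ q ^ (n - i) := by ring_nf
        _ = ν ^ q ^ (n - i) * (a i * w) ^ q ^ (n - i) := mul_pow _ _ _
        _ = ν * (a i * w) ^ q ^ (n - i) := by rw [hνpow]
    have hbij2 : Function.Bijective (fun z : F => s⁻¹ * z) :=
      mulLeft_bijective₀ s⁻¹ (inv_ne_zero hs)
    have e1 : ∑ y : F, χ (L' (b * y ^ (q + 1)) * y⁻¹)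
        = ∑ z : F, χ (L' (b * (s⁻¹ * z) ^ (q + 1)) * (s⁻¹ * z)⁻¹) :=
      (hbij2.sum_comp (fun y => χ (L' (b * y ^ (q + 1)) * y⁻¹))).symm
    rw [e1]
    have e2 : ∀ z : F, L' (b * (s⁻¹ * z) ^ (q + 1)) * (s⁻¹ * z)⁻¹
        = (ν * s) * (L' (z ^ (q + 1)) * z⁻¹) := by
      intro z
      have hss : (s : F) ^ (q + 1) * (s⁻¹) ^ (q + 1) = 1 := by
        rw [← mul_pow, mul_inv_cancel₀ hs, one_pow]
      have h1 : b * (s⁻¹ * z) ^ (q + 1) = ν * z ^ (q + 1) := by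
        rw [hbeq, mul_pow]
        calc ν * s ^ (q + 1) * ((s⁻¹) ^ (q + 1) * z ^ (q + 1))
            = ν * (s ^ (q + 1) * (s⁻¹) ^ (q + 1)) * z ^ (q + 1) := by ring
          _ = ν * z ^ (q + 1) := by rw [hss, mul_one]
      rw [h1, hLsc, mul_inv, inv_inv]
      ring
    calc ∑ z : F, χ (L' (b * (s⁻¹ * z) ^ (q + 1)) * (s⁻¹ * z)⁻¹)
        = ∑ z : F, χ ((ν * s) * ((fun x : F => L' (x ^ (q + 1)) * x⁻¹) z)) := by
          refine Finset.sum_congr rfl (fun z _ => ?_)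
          rw [e2 z]
      _ = ∑ w : F, χ ((ν * s) * w) := h.sum_comp (fun w => χ ((ν * s) * w))
      _ = ∑ w : F, χ (w * (ν * s)) := by
          refine Finset.sum_congr rfl (fun w _ => ?_)
          rw [mul_comm]
      _ = 0 := O1 _ hνs
  -- fiber counting
  have fib : ∀ c : F, (Finset.univ.filter (fun x : F => f x = c)).card = 1 := by
    intro c
    have hdouble : ∑ x : F, ∑ b : F, χ (b * (f x - c))
        = ((Finset.univ.filter (fun x : F => f x = c)).card : K) * (Fintype.card F : K) := by
      calc ∑ x : F, ∑ b : F, χ (b * (f x - c))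
          = ∑ x : F, (if f x = c then (Fintype.card F : K) else 0) := by
            refine Finset.sum_congr rfl (fun x _ => ?_)
            by_cases hfx : f x = c
            · rw [if_pos hfx]
              have : ∀ b : F, χ (b * (f x - c)) = 1 := by
                intro b
                rw [hfx, sub_self, mul_zero, AddChar.map_zero_eq_one]
              rw [Finset.sum_congr rfl (fun b _ => this b), Finset.sum_const, Finset.card_univ,
                nsmul_eq_mul, mul_one]
            · rw [if_neg hfx]
              exact O1 _ (sub_ne_zero.mpr hfx)
        _ = ((Finset.univ.filter (fun x : F => f x = c)).card : K) * (Fintype.card F : K) := by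
            rw [Finset.sum_ite, Finset.sum_const, Finset.sum_const_zero, add_zero, nsmul_eq_mul]
    have hswap : ∑ x : F, ∑ b : F, χ (b * (f x - c)) = (Fintype.card F : K) := by
      rw [Finset.sum_comm]
      have hpt : ∀ b : F, ∑ x : F, χ (b * (f x - c))
          = (∑ x : F, χ (b * f x)) * χ (-(b * c)) := by
        intro b
        rw [Finset.sum_mul]
        refine Finset.sum_congr rfl (fun x _ => ?_)
        have harg : b * (f x - c) = b * f x + (-(b * c)) := by ring
        rw [harg, AddChar.map_add_eq_mul]
      rw [Finset.sum_congr rfl (fun b _ => hpt b)]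
      rw [Finset.sum_eq_single (0 : F)]
      · simp only [zero_mul, AddChar.map_zero_eq_one, mul_one, neg_zero]
        rw [Finset.sum_const, Finset.card_univ, nsmul_eq_mul, mul_one]
      · intro b _ hb
        rw [hS b hb, zero_mul]
      · intro habs
        exact absurd (Finset.mem_univ 0) habs
    have hcardne : (Fintype.card F : K) ≠ 0 := Nat.cast_ne_zero.mpr Fintype.card_ne_zero
    have : ((Finset.univ.filter (fun x : F => f x = c)).card : K) * (Fintype.card F : K)
        = 1 * (Fintype.card F : K) := by
      rw [← hdouble, hswap, one_mul]
    have := mul_right_cancel₀ hcardne this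
    exact_mod_cast this
  -- conclusion
  show Function.Bijective f
  rw [Function.bijective_iff_existsUnique]
  intro c
  obtain ⟨x0, hx0⟩ := Finset.card_eq_one.mp (fib c)
  have hx0mem : x0 ∈ Finset.univ.filter (fun x : F => f x = c) := by
    rw [hx0]; exact Finset.mem_singleton_self x0
  refine ⟨x0, (Finset.mem_filter.mp hx0mem).2, ?_⟩
  intro y hy
  have hymem : y ∈ Finset.univ.filter (fun x : F => f x = c) :=
    Finset.mem_filter.mpr ⟨Finset.mem_univ y, hy⟩
  rw [hx0] at hymem
  exact Finset.mem_singleton.mp hymem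
end

section
/- Let q be a prime power, n a positive integer, and L(x) = ∑_{i=0}^{n-1} a_i x^{q^i} a q-linear polynomial over F_{q^n}. If the map x ↦ L(x)·x^{-(q+1)} (where x^{-1} denotes x^{q^n-2}, so 0 maps to 0) is a bijection of F_{q^n}, then L is a bijection of F_{q^n} and the map x ↦ L^{-1}(x^{q+1})·x^{-1} is also a bijection of F_{q^n}, where L^{-1} denotes the inverse map of L. -/
/-!
Since `q` is a power of the characteristic, `L` is additive; bijectivity of
`f x = L x * x⁻¹ ^ (q + 1)` forces `L x ≠ 0` for `x ≠ 0`, so `L` is injective, hence bijective.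
For the second map `g`, put `u = L⁻¹ (x ^ (q + 1))` and `w = g x = u / x`: then `x = u / w` and
`f u = w⁻¹ ^ (q + 1)`, so `g x` determines `f u`, hence `u`, hence `x`.
-/

open Function Finset

theorem ringChar_pow_eq_of_card_eq_pow {F : Type*} [Field F] [Fintype F] {q n : ℕ}
    (hq : IsPrimePow q) (hF : Fintype.card F = q ^ n) : ∃ k, q = ringChar F ^ k := by
  obtain ⟨r, k, hr, -, rfl⟩ := hq
  obtain ⟨m, hp, hcard⟩ := FiniteField.card F (ringChar F)
  have hpr : ringChar F ∣ r :=
    (hp.dvd_of_dvd_pow (n := k * n)) <| by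
      rw [pow_mul, ← hF, hcard]; exact dvd_pow_self _ m.ne_zero
  exact ⟨k, by rw [(Nat.prime_dvd_prime_iff_eq hp hr.nat_prime).1 hpr]⟩

theorem sum_mul_pow_pow_add {R : Type*} [CommSemiring R] (p : ℕ) [ExpChar R p] (k : ℕ)
    (s : Finset ℕ) (a : ℕ → R) (x y : R) :
    ∑ i ∈ s, a i * (x + y) ^ (p ^ k) ^ i =
      ∑ i ∈ s, a i * x ^ (p ^ k) ^ i + ∑ i ∈ s, a i * y ^ (p ^ k) ^ i := by
  simp only [← pow_mul, add_pow_expChar_pow, mul_add, sum_add_distrib]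

theorem AddMonoidHom.injective_of_injective_mul_inv_pow {F : Type*} [DivisionRing F] (m : ℕ)
    (L : F →+ F) (hf : Injective fun x => L x * x⁻¹ ^ m) : Injective L :=
  (injective_iff_map_eq_zero L).2 fun x hx => hf (by simp [hx])

theorem injective_apply_pow_mul_inv {G₀ : Type*} [CommGroupWithZero G₀] (m : ℕ)
    {L M : G₀ → G₀} (hLM : LeftInverse L M) (hL0 : L 0 = 0)
    (hf : Injective fun x => L x * x⁻¹ ^ m) : Injective fun x => M (x ^ m) * x⁻¹ := by
  set g : G₀ → G₀ := fun x => M (x ^ m) * x⁻¹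
  have key : ∀ x, x = M (x ^ m) * (g x)⁻¹ ∧ L (M (x ^ m)) * (M (x ^ m))⁻¹ ^ m = (g x)⁻¹ ^ m := by
    intro x
    refine ⟨?_, by rw [hLM, mul_inv, inv_inv, mul_pow, mul_comm]⟩
    rcases eq_or_ne x 0 with rfl | hx
    · simp [g]
    have hM : M (x ^ m) ≠ 0 := fun h0 => pow_ne_zero m hx (by rw [← hLM (x ^ m), h0, hL0])
    rw [mul_inv, inv_inv, mul_inv_cancel_left₀ hM]
  intro x y hxy
  have hM : M (x ^ m) = M (y ^ m) := hf <| by simp only [(key x).2, (key y).2, hxy]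
  calc x = M (x ^ m) * (g x)⁻¹ := (key x).1
    _ = M (y ^ m) * (g y)⁻¹ := by rw [hM, hxy]
    _ = y := (key y).1.symm

theorem stmt_2_general (q n : ℕ) (hq : IsPrimePow q)
    (F : Type*) [Field F] [Fintype F] (hF : Fintype.card F = q ^ n)
    (a : ℕ → F)
    (L : F → F) (hL : ∀ x, L x = ∑ i ∈ Finset.range n, a i * x ^ q ^ i)
    (h : Function.Bijective fun x : F => L x * (x⁻¹) ^ (q + 1)) :
    Function.Bijective L ∧
      Function.Bijective fun x : F => Function.invFun L (x ^ (q + 1)) * x⁻¹ := by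
  obtain ⟨k, rfl⟩ := ringChar_pow_eq_of_card_eq_pow hq hF
  have : ExpChar F (ringChar F) := ExpChar.prime (CharP.char_is_prime F _)
  let L' : F →+ F := AddMonoidHom.mk' L fun x y => by
    simp only [hL, sum_mul_pow_pow_add (ringChar F)]
  have hLbij : Bijective L := Finite.injective_iff_bijective.1 <|
    L'.injective_of_injective_mul_inv_pow _ h.injective
  exact ⟨hLbij, Finite.injective_iff_bijective.1 <|
    injective_apply_pow_mul_inv _ (rightInverse_invFun hLbij.2) (map_zero L') h.injective⟩

/-- If `x ↦ L(x)·x^{-(q+1)}` is a bijection of `F_{q^n}`, then `L` is a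
bijection and `x ↦ L⁻¹(x^{q+1})·x^{-1}` is a bijection. -/
theorem stmt_2 (q n : ℕ) (hq : IsPrimePow q) (hn : 0 < n)
    (F : Type*) [Field F] [Fintype F] (hF : Fintype.card F = q ^ n)
    (a : ℕ → F)
    (L : F → F) (hL : ∀ x, L x = ∑ i ∈ Finset.range n, a i * x ^ q ^ i)
    (h : Function.Bijective fun x : F => L x * (x⁻¹) ^ (q + 1)) :
    Function.Bijective L ∧
      Function.Bijective fun x : F => Function.invFun L (x ^ (q + 1)) * x⁻¹ :=
  stmt_2_general q n hq F hF a L hL h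
end

section
/- Let q be a prime power, n an odd positive integer, and L(x) = ∑_{i=0}^{n-1} a_i x^{q^i} a q-linear polynomial over F_{q^n}. If L is a bijection of F_{q^n} and the map x ↦ L^{-1}(x^{q+1})·x^{-1} (where x^{-1} denotes x^{q^n-2}, so 0 maps to 0, and L^{-1} is the inverse map of L) is a bijection of F_{q^n}, then the map x ↦ L(x)·x^{-(q+1)} is a bijection of F_{q^n}. -/
lemma exists_root_aux (q n : ℕ) (hq2 : 2 ≤ q) (hn : Odd n)
    (F : Type*) [Field F] [Fintype F] (hF : Fintype.card F = q ^ n)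
    (c : F) (hc : c ≠ 0) : ∃ e : F, e ≠ 0 ∧ e ^ (q ^ 2 - 1) = (c⁻¹) ^ (q - 1) := by
  classical
  have hn1 : 1 ≤ n := hn.pos
  have hqle : q ≤ q ^ (n + 1) := Nat.le_self_pow (by omega) q
  have hg : Nat.gcd (q ^ 2 - 1) (q ^ n - 1) ∣ q - 1 := by
    have h1 : Nat.gcd (q ^ 2 - 1) (q ^ n - 1) ∣ q ^ (n + 1) - q := by
      have heq : q * (q ^ n - 1) = q ^ (n + 1) - q := by
        zify [Nat.one_le_pow n q (by omega), hqle]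
        ring
      calc Nat.gcd (q ^ 2 - 1) (q ^ n - 1) ∣ q ^ n - 1 := Nat.gcd_dvd_right _ _
        _ ∣ q * (q ^ n - 1) := dvd_mul_left _ _
        _ = q ^ (n + 1) - q := heq
    have h2 : Nat.gcd (q ^ 2 - 1) (q ^ n - 1) ∣ q ^ (n + 1) - 1 := by
      obtain ⟨k, hk⟩ := hn
      have : q ^ 2 - 1 ∣ q ^ (n + 1) - 1 := by
        have := Nat.sub_dvd_pow_sub_pow (q ^ 2) 1 (k + 1)
        simpa [← pow_mul, one_pow, hk, show 2 * (k + 1) = 2 * k + 1 + 1 by ring] using this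
      exact dvd_trans (Nat.gcd_dvd_left _ _) this
    have h3 := Nat.dvd_sub h2 h1
    have heq2 : q ^ (n + 1) - 1 - (q ^ (n + 1) - q) = q - 1 := by omega
    rwa [heq2] at h3
  obtain ⟨t, ht⟩ := hg
  have hbez := Nat.gcd_eq_gcd_ab (q ^ 2 - 1) (q ^ n - 1)
  have hcard : Fintype.card Fˣ = q ^ n - 1 := by rw [Fintype.card_units, hF]
  set A := Nat.gcdA (q ^ 2 - 1) (q ^ n - 1) with hA
  set B := Nat.gcdB (q ^ 2 - 1) (q ^ n - 1) with hB
  set u : Fˣ := Units.mk0 c hc with hu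
  set E : Fˣ := (u⁻¹) ^ (A * t) with hE
  refine ⟨(E : F), Units.ne_zero E, ?_⟩
  have hone : (u⁻¹ : Fˣ) ^ (((q ^ n - 1 : ℕ)) : ℤ) = 1 := by
    rw [zpow_natCast, ← hcard, pow_card_eq_one]
  have hexp : ((q - 1 : ℕ) : ℤ) =
      ((q ^ 2 - 1 : ℕ) : ℤ) * (A * t) + ((q ^ n - 1 : ℕ) : ℤ) * (B * t) := by
    have : ((q - 1 : ℕ) : ℤ) = (((q ^ 2 - 1 : ℕ).gcd (q ^ n - 1) : ℕ) : ℤ) * (t : ℤ) := by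
      exact_mod_cast congrArg (Nat.cast : ℕ → ℤ) ht
    rw [this, hbez]; ring
  have key : E ^ (q ^ 2 - 1) = (u⁻¹) ^ (q - 1) := by
    have : (u⁻¹ : Fˣ) ^ ((q - 1 : ℕ) : ℤ) = E ^ ((q ^ 2 - 1 : ℕ) : ℤ) := by
      rw [hexp, zpow_add, mul_comm ((q ^ 2 - 1 : ℕ) : ℤ) (A * (t : ℤ)),
        zpow_mul u⁻¹ (A * (t : ℤ)) ((q ^ 2 - 1 : ℕ) : ℤ),
        zpow_mul u⁻¹ ((q ^ n - 1 : ℕ) : ℤ) (B * (t : ℤ)),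
        hone, one_zpow, mul_one, hE]
    rw [← zpow_natCast E, ← this, zpow_natCast]
  have := congrArg (Units.val) key
  rw [Units.val_pow_eq_pow_val, Units.val_pow_eq_pow_val] at this
  simpa [hu] using this

/-- For odd `n`, if `L` is a bijection of `F_{q^n}` and
`x ↦ L⁻¹(x^{q+1})·x^{-1}` is a bijection, then `x ↦ L(x)·x^{-(q+1)}` is a bijection. -/
theorem stmt_3 (q n : ℕ) (hq : IsPrimePow q) (hn : Odd n)
    (F : Type*) [Field F] [Fintype F] (hF : Fintype.card F = q ^ n)
    (a : ℕ → F)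
    (L : F → F) (hL : ∀ x, L x = ∑ i ∈ Finset.range n, a i * x ^ q ^ i)
    (hLbij : Function.Bijective L)
    (h : Function.Bijective fun x : F => Function.invFun L (x ^ (q + 1)) * x⁻¹) :
    Function.Bijective fun x : F => L x * (x⁻¹) ^ (q + 1) := by
  have hq2 : 2 ≤ q := hq.two_le
  have Linj := hLbij.injective
  have Minv : ∀ y, Function.invFun L (L y) = y := Function.leftInverse_invFun Linj
  have L0 : L 0 = 0 := by
    rw [hL]
    apply Finset.sum_eq_zero
    intro i _
    rw [zero_pow (pow_ne_zero i (by omega : q ≠ 0)), mul_zero]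
  have key0 : ∀ x : F, L x * (x⁻¹) ^ (q + 1) = 0 → x = 0 := by
    intro x h0
    by_contra hx0
    have hinv : (x⁻¹) ^ (q + 1) ≠ 0 := pow_ne_zero _ (inv_ne_zero hx0)
    have : L x = 0 := by
      rcases mul_eq_zero.mp h0 with h' | h'
      · exact h'
      · exact absurd h' hinv
    exact hx0 (Linj (this.trans L0.symm))
  rw [← Finite.injective_iff_bijective]
  intro x₁ x₂ hx
  simp only at hx
  by_cases h1 : x₁ = 0
  · subst h1
    have : L 0 * (0⁻¹ : F) ^ (q + 1) = 0 := by rw [L0, zero_mul]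
    rw [this] at hx
    exact (key0 x₂ hx.symm).symm
  by_cases h2 : x₂ = 0
  · subst h2
    have : L 0 * (0⁻¹ : F) ^ (q + 1) = 0 := by rw [L0, zero_mul]
    rw [this] at hx
    exact key0 x₁ hx
  -- both nonzero
  set c := L x₁ * (x₁⁻¹) ^ (q + 1) with hcdef
  have hc2 : L x₂ * (x₂⁻¹) ^ (q + 1) = c := hx.symm
  have hcne : c ≠ 0 := fun h0 => h1 (key0 x₁ (hcdef ▸ h0))
  obtain ⟨e, hene, hee⟩ := exists_root_aux q n hq2 hn F hF c hcne
  set μ := c⁻¹ * (e⁻¹) ^ (q + 1) with hμdef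
  have hμne : μ ≠ 0 := mul_ne_zero (inv_ne_zero hcne) (pow_ne_zero _ (inv_ne_zero hene))
  have hq1sq : (q + 1) * (q - 1) = q ^ 2 - 1 := by
    zify [show 1 ≤ q by omega, show 1 ≤ q ^ 2 from Nat.one_le_pow _ _ (by omega)]
    ring
  have hμq1 : μ ^ (q - 1) = 1 := by
    rw [hμdef, mul_pow, ← pow_mul, hq1sq, inv_pow e (q ^ 2 - 1), hee,
      mul_inv_cancel₀ (pow_ne_zero _ (inv_ne_zero hcne))]
  have hμq : μ ^ q = μ := by
    have : μ ^ q = μ ^ (q - 1) * μ := by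
      rw [← pow_succ]
      congr 1
      omega
    rw [this, hμq1, one_mul]
  have hμinvq : (μ⁻¹) ^ q = μ⁻¹ := by rw [inv_pow, hμq]
  -- q-power stability
  have hstab : ∀ (ν : F), ν ^ q = ν → ∀ i, ν ^ (q ^ i) = ν := by
    intro ν hν i
    induction i with
    | zero => simp
    | succ i ih => rw [pow_succ, pow_mul, ih, hν]
  have hLs : ∀ x : F, L (μ⁻¹ * x) = μ⁻¹ * L x := by
    intro x
    rw [hL, hL, Finset.mul_sum]
    apply Finset.sum_congr rfl
    intro i _
    rw [mul_pow, hstab μ⁻¹ hμinvq i]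
    ring
  have hLx : ∀ x : F, x ≠ 0 → L x * (x⁻¹) ^ (q + 1) = c → L x = c * x ^ (q + 1) := by
    intro x hx0 hxc
    have hp : x ^ (q + 1) ≠ 0 := pow_ne_zero _ hx0
    rw [inv_pow] at hxc
    field_simp at hxc
    exact hxc.trans (mul_comm _ _)
  -- key scaling identity
  have hkey : μ * c = (e⁻¹) ^ (q + 1) := by
    rw [hμdef]
    field_simp
  -- the equation L (e * y) = y ^ (q+1) for y = μ⁻¹ * x * e⁻¹
  have main : ∀ x : F, x ≠ 0 → L x = c * x ^ (q + 1) →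
      Function.invFun L ((μ⁻¹ * x * e⁻¹) ^ (q + 1)) * (μ⁻¹ * x * e⁻¹)⁻¹ = e := by
    intro x hx0 hxc
    set y := μ⁻¹ * x * e⁻¹ with hydef
    have hy0 : y ≠ 0 := by
      rw [hydef]
      exact mul_ne_zero (mul_ne_zero (inv_ne_zero hμne) hx0) (inv_ne_zero hene)
    have hey : e * y = μ⁻¹ * x := by
      rw [hydef]; field_simp
    have hLy : L (e * y) = y ^ (q + 1) := by
      rw [hey, hLs, hxc, hydef]
      rw [mul_pow, mul_pow]
      have h1 : (μ⁻¹) ^ (q + 1) = μ⁻¹ * μ⁻¹ := by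
        rw [inv_pow, pow_succ, hμq, mul_inv]
      rw [h1]
      have h2 : μ⁻¹ * (c * x ^ (q + 1)) * (μ * μ) = μ⁻¹ * μ⁻¹ * x ^ (q + 1) * (e⁻¹) ^ (q + 1) * (μ * μ) → 
          μ⁻¹ * (c * x ^ (q + 1)) = μ⁻¹ * μ⁻¹ * x ^ (q + 1) * (e⁻¹) ^ (q + 1) := by
        intro hh
        exact mul_right_cancel₀ (mul_ne_zero hμne hμne) hh
      apply h2
      calc μ⁻¹ * (c * x ^ (q + 1)) * (μ * μ) = (μ * c) * x ^ (q + 1) * (μ * μ⁻¹) := by ring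
        _ = (e⁻¹) ^ (q + 1) * x ^ (q + 1) * 1 := by rw [hkey, mul_inv_cancel₀ hμne]
        _ = μ⁻¹ * μ⁻¹ * x ^ (q + 1) * (e⁻¹) ^ (q + 1) * (μ * μ) := by
            field_simp
    rw [← hLy, Minv]
    exact mul_inv_cancel_right₀ hy0 e
  have e₁ := main x₁ h1 (hLx x₁ h1 rfl)
  have e₂ := main x₂ h2 (hLx x₂ h2 hc2)
  have hyy : (fun x : F => Function.invFun L (x ^ (q + 1)) * x⁻¹) (μ⁻¹ * x₁ * e⁻¹)
      = (fun x : F => Function.invFun L (x ^ (q + 1)) * x⁻¹) (μ⁻¹ * x₂ * e⁻¹) := by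
    simp only
    rw [e₁, e₂]
  have hyeq := h.injective hyy
  have h3 : μ⁻¹ * x₁ = μ⁻¹ * x₂ := mul_right_cancel₀ (inv_ne_zero hene) hyeq
  exact mul_left_cancel₀ (inv_ne_zero hμne) h3
end

section
/- Let q be a prime power, n a positive integer, and let a ∈ F_{q^n} be nonzero with N(-a) ≠ 1, where N(x) = ∏_{i=0}^{n-1} x^{q^i} is the norm map. Then the map L : x ↦ x^q + a·x is a bijection of F_{q^n}, and the map x ↦ L^{-1}(x^{q+1})·x^{-1} (where x^{-1} denotes x^{q^n-2}, so 0 maps to 0, and L^{-1} is the inverse map of L) is a bijection of F_{q^n}. -/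
/-- For `a ≠ 0` with `N(-a) ≠ 1`, the map `L : x ↦ x^q + a·x` is a bijection
of `F_{q^n}` and `x ↦ L⁻¹(x^{q+1})·x^{-1}` is a bijection. -/
theorem stmt_4 (q n : ℕ) (hq : IsPrimePow q) (hn : 0 < n)
    (F : Type*) [Field F] [Fintype F] (hF : Fintype.card F = q ^ n)
    (a : F) (ha : a ≠ 0) (hNa : ∏ i ∈ Finset.range n, (-a) ^ q ^ i ≠ 1)
    (L : F → F) (hL : ∀ x, L x = x ^ q + a * x) :
    Function.Bijective L ∧
      Function.Bijective fun x : F => Function.invFun L (x ^ (q + 1)) * x⁻¹ := by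
  classical
  obtain ⟨p, k, hp, hk, hpk⟩ := hq
  have hp' : Nat.Prime p := Nat.prime_iff.mpr hp
  haveI : Fact (Nat.Prime p) := ⟨hp'⟩
  have hq2 : 2 ≤ q := by
    rw [← hpk]
    calc 2 ≤ p := hp'.two_le
    _ = p ^ 1 := (pow_one p).symm
    _ ≤ p ^ k := Nat.pow_le_pow_right hp'.pos hk
  -- characteristic of F is p
  have hp0 : (p : F) = 0 := by
    have h1 : ((Fintype.card F : ℕ) : F) = 0 := FiniteField.cast_card_eq_zero F
    rw [hF, ← hpk, ← pow_mul] at h1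
    push_cast at h1
    exact pow_eq_zero_iff (by positivity : k * n ≠ 0) |>.mp h1
  haveI : CharP F p := (CharP.charP_iff_prime_eq_zero hp').mpr hp0
  have frob_sub : ∀ x y : F, (x - y) ^ q = x ^ q - y ^ q := by
    intro x y; rw [← hpk]; exact sub_pow_char_pow x y k (p := p)
  -- pow card
  have hpc : ∀ t : F, t ^ (q ^ n) = t := by
    intro t; rw [← hF]; exact FiniteField.pow_card t
  -- write q = r + 1 to avoid natural subtraction
  obtain ⟨r, hr⟩ : ∃ r, q = r + 1 := ⟨q - 1, by omega⟩
  set e := ∑ i ∈ Finset.range n, q ^ i with he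
  have hNa' : (-a) ^ e ≠ 1 := by
    rwa [← Finset.prod_pow_eq_pow_sum]
  have hEgen : ∀ m : ℕ, (∑ i ∈ Finset.range m, q ^ i) * r + 1 = q ^ m := by
    intro m
    induction m with
    | zero => simp
    | succ m ih =>
      rw [Finset.sum_range_succ, add_mul, pow_succ]
      calc (∑ i ∈ Finset.range m, q ^ i) * r + q ^ m * r + 1
          = ((∑ i ∈ Finset.range m, q ^ i) * r + 1) + q ^ m * r := by ring
        _ = q ^ m + q ^ m * r := by rw [ih]
        _ = q ^ m * q := by rw [hr]; ring
  have hE : e * r + 1 = q ^ n := hEgen n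
  -- key cancellation lemmas
  have hkey : ∀ t : F, t ≠ 0 → t ^ (e * r) = 1 := by
    intro t ht
    have h2 : t ^ (e * r) * t = t := by
      rw [← pow_succ, hE, hpc]
    have := mul_right_cancel₀ ht (h2.trans (one_mul t).symm)
    exact this
  have hred : ∀ t : F, t ≠ 0 → ∀ m : ℕ, t ^ (e * r + m) = t ^ m := by
    intro t ht m; rw [pow_add, hkey t ht, one_mul]
  have hstab : ∀ t : F, t ≠ 0 → t ^ (q * e) = t ^ e := by
    intro t ht
    have hid : q * e = e * r + e := by rw [hr]; ring
    rw [hid, hred t ht]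
  -- L is injective
  have hL0 : L 0 = 0 := by rw [hL]; simp [zero_pow (by omega : q ≠ 0)]
  have hLinj : Function.Injective L := by
    intro x y hxy
    by_contra hne
    have ht : x - y ≠ 0 := sub_ne_zero.mpr hne
    have h0 : L x - L y = 0 := by rw [hxy, sub_self]
    rw [hL, hL] at h0
    have h1 : (x - y) ^ q = (-a) * (x - y) := by
      rw [frob_sub]; linear_combination h0
    have h2 : (x - y) ^ (q * e) = (-a) ^ e * (x - y) ^ e := by
      rw [pow_mul, h1, mul_pow]
    rw [hstab _ ht] at h2
    have he0 : (x - y) ^ e ≠ 0 := pow_ne_zero _ ht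
    have h3 : (-a) ^ e = 1 := by
      have := mul_right_cancel₀ he0 ((one_mul ((x-y)^e)).trans h2)
      exact this.symm
    exact hNa' h3
  have hLbij : Function.Bijective L := Finite.injective_iff_bijective.mp hLinj
  refine ⟨hLbij, ?_⟩
  have hLinv : ∀ z, L (Function.invFun L z) = z :=
    fun z => Function.rightInverse_invFun hLbij.surjective z
  -- the second map sends only 0 to 0
  have hg0 : ∀ x : F, Function.invFun L (x ^ (q + 1)) * x⁻¹ = 0 → x = 0 := by
    intro x hx
    by_contra hxne
    rcases mul_eq_zero.mp hx with h | h
    · have hxp : x ^ (q + 1) = 0 := by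
        rw [← hLinv (x ^ (q + 1)), h, hL0]
      exact hxne (pow_eq_zero_iff (by omega : q + 1 ≠ 0) |>.mp hxp)
    · exact hxne (inv_eq_zero.mp h)
  refine Finite.injective_iff_bijective.mp ?_
  intro x1 x2 hx
  simp only at hx
  by_cases h1 : x1 = 0
  · subst h1
    by_contra h2
    apply Ne.symm h2
    apply hg0
    rw [← hx]
    simp
  by_cases h2 : x2 = 0
  · subst h2
    exfalso
    apply h1
    apply hg0
    rw [hx]
    simp
  -- main case
  obtain ⟨y, hy1, hy2⟩ : ∃ y, Function.invFun L (x1 ^ (q + 1)) * x1⁻¹ = y ∧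
      Function.invFun L (x2 ^ (q + 1)) * x2⁻¹ = y := ⟨_, rfl, hx.symm⟩
  have hyne : y ≠ 0 := by
    intro h0
    exact h1 (hg0 x1 (by rw [hy1, h0]))
  have main : ∀ x : F, x ≠ 0 → Function.invFun L (x ^ (q + 1)) * x⁻¹ = y →
      (x - y ^ q ≠ 0) ∧
      (x - y ^ q) ^ q * (x - y ^ q)
        = (a * y - (y ^ q) ^ q) * (x - y ^ q) + a * (y ^ q * y) ∧
      (x - y ^ q) ^ e = a ^ e * y ^ e := by
    intro x hx0 hyx
    have hw : Function.invFun L (x ^ (q + 1)) = y * x := by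
      field_simp at hyx
      linear_combination hyx
    have H := hLinv (x ^ (q + 1))
    rw [hw, hL, mul_pow] at H
    -- H : y ^ q * x ^ q + a * (y * x) = x ^ (q + 1)
    have Hc : x ^ q * (x - y ^ q) = a * (y * x) := by linear_combination -H
    have hcne : x - y ^ q ≠ 0 := by
      intro h
      rw [h, mul_zero] at Hc
      exact ha (by
        have := Hc.symm
        rcases mul_eq_zero.mp this with h' | h'
        · exact h'
        · exact absurd h' (mul_ne_zero hyne hx0))
    refine ⟨hcne, ?_, ?_⟩
    · rw [frob_sub]
      linear_combination -H
    · have hpow : (x ^ q) ^ e * (x - y ^ q) ^ e = (a * (y * x)) ^ e := by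
        rw [← mul_pow, Hc]
      rw [← pow_mul, hstab x hx0, mul_pow, mul_pow] at hpow
      have hxe : x ^ e ≠ 0 := pow_ne_zero _ hx0
      -- hpow : x ^ e * (x - y^q)^e = a^e * (y^e * x^e)
      apply mul_left_cancel₀ hxe
      rw [hpow]; ring
  obtain ⟨hc1ne, hc1eq, hc1e⟩ := main x1 h1 hy1
  obtain ⟨hc2ne, hc2eq, hc2e⟩ := main x2 h2 hy2
  by_contra hne
  have hdne : (x1 - y ^ q) - (x2 - y ^ q) ≠ 0 := by
    intro h
    exact hne (by linear_combination h)
  have hdq : ((x1 - y ^ q) - (x2 - y ^ q)) ^ q * ((x1 - y ^ q) * (x2 - y ^ q))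
      = -(a * (y ^ q * y)) * ((x1 - y ^ q) - (x2 - y ^ q)) := by
    rw [frob_sub]
    linear_combination (x2 - y ^ q) * hc1eq - (x1 - y ^ q) * hc2eq
  have A : (((x1 - y ^ q) - (x2 - y ^ q)) ^ q * ((x1 - y ^ q) * (x2 - y ^ q))) ^ e
      = (-(a * (y ^ q * y)) * ((x1 - y ^ q) - (x2 - y ^ q))) ^ e := by
    rw [hdq]
  have hde : ((x1 - y ^ q) - (x2 - y ^ q)) ^ e ≠ 0 := pow_ne_zero _ hdne
  have hye : y ^ e ≠ 0 := pow_ne_zero _ hyne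
  have hae : a ^ e ≠ 0 := pow_ne_zero _ ha
  have lhs1 : (((x1 - y ^ q) - (x2 - y ^ q)) ^ q * ((x1 - y ^ q) * (x2 - y ^ q))) ^ e
      = ((x1 - y ^ q) - (x2 - y ^ q)) ^ e * (a ^ e * y ^ e * (a ^ e * y ^ e)) := by
    rw [mul_pow, mul_pow, hc1e, hc2e, ← pow_mul, hstab _ hdne]
  have rhs1 : (-(a * (y ^ q * y)) * ((x1 - y ^ q) - (x2 - y ^ q))) ^ e
      = (-1) ^ e * (a ^ e * (y ^ e * y ^ e)) * ((x1 - y ^ q) - (x2 - y ^ q)) ^ e := by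
    rw [mul_pow, neg_pow, mul_pow, mul_pow, ← pow_mul, hstab y hyne]
  have heq := lhs1.symm.trans (A.trans rhs1)
  have h5 : a ^ e * a ^ e = (-1) ^ e * a ^ e := by
    apply mul_right_cancel₀ (mul_ne_zero hye hye)
    apply mul_right_cancel₀ hde
    linear_combination heq
  have hm1 : ((-1 : F) ^ e) * ((-1) ^ e) = 1 := by
    rw [← mul_pow]; norm_num
  have hsq : ((-a) ^ e) * ((-a) ^ e) = (-a) ^ e := by
    rw [neg_pow]
    linear_combination ((-1 : F) ^ e * (-1 : F) ^ e) * h5 + ((-1 : F) ^ e * a ^ e) * hm1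
  have hNne : (-a) ^ e ≠ 0 := pow_ne_zero _ (neg_ne_zero.mpr ha)
  have hNa1 : (-a) ^ e = 1 := mul_left_cancel₀ hNne (hsq.trans (mul_one _).symm)
  exact hNa' hNa1
end

section
/- Let q be a prime power, n a positive integer, and let a ∈ F_{q^n} be nonzero with N(-a) ≠ 1, where N(x) = ∏_{i=0}^{n-1} x^{q^i} is the norm map. Then the map L : x ↦ x^{q^{n-1}} + a·x is a bijection of F_{q^n}, and the map x ↦ L^{-1}(x)·x^{-(q+1)} (where x^{-1} denotes x^{q^n-2}, so 0 maps to 0, and L^{-1} is the inverse map of L) is a bijection of F_{q^n}. -/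
/-- For `a ≠ 0` with `N(-a) ≠ 1`, the map `L : x ↦ x^{q^{n-1}} + a·x` is a
bijection of `F_{q^n}` and `x ↦ L⁻¹(x)·x^{-(q+1)}` is a bijection. -/
theorem stmt_5 (q n : ℕ) (hq : IsPrimePow q) (hn : 0 < n)
    (F : Type*) [Field F] [Fintype F] (hF : Fintype.card F = q ^ n)
    (a : F) (ha : a ≠ 0) (hNa : ∏ i ∈ Finset.range n, (-a) ^ q ^ i ≠ 1)
    (L : F → F) (hL : ∀ x, L x = x ^ q ^ (n - 1) + a * x) :
    Function.Bijective L ∧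
      Function.Bijective fun x : F => Function.invFun L x * (x⁻¹) ^ (q + 1) := by
  classical
  -- characteristic setup
  obtain ⟨p, k, hpp, hk, hpk⟩ := hq
  have hp' : p.Prime := Nat.prime_iff.2 hpp
  haveI : Fact p.Prime := ⟨hp'⟩
  have hq2 : 2 ≤ q := by rw [← hpk]; calc 2 ≤ p := hp'.two_le
                                          _ ≤ p ^ k := Nat.le_self_pow (by omega) p
  obtain ⟨r, hr⟩ := CharP.exists F
  haveI := hr
  obtain ⟨m, hrp, hcard⟩ := FiniteField.card F r
  have hqr : p = r := by
    have h1 : p ∣ r ^ (m : ℕ) := by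
      rw [← hcard, hF, ← hpk, ← pow_mul]
      exact dvd_pow_self p (by positivity)
    exact (Nat.prime_dvd_prime_iff_eq hp' hrp).1 (hp'.dvd_of_dvd_pow h1)
  subst hqr
  -- basic exponent arithmetic
  set e := ∑ i ∈ Finset.range n, q ^ i with he_def
  have hNa' : (-a) ^ e ≠ 1 := by
    rw [Finset.prod_pow_eq_pow_sum, ← he_def] at hNa
    exact hNa
  have he : (q - 1) * e + 1 = q ^ n := by
    have h2 := geom_sum_mul ((q : ℕ) : ℤ) n
    have h3 : ((e : ℕ) : ℤ) * (((q : ℕ) : ℤ) - 1) = ((q : ℕ) : ℤ) ^ n - 1 := by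
      rw [← h2, he_def]; push_cast; ring
    zify [show 1 ≤ q by omega]
    linear_combination h3
  -- Frobenius facts
  have hfrob : ∀ (j : ℕ) (x y : F), (x + y) ^ q ^ j = x ^ q ^ j + y ^ q ^ j := by
    intro j x y
    rw [← hpk, ← pow_mul]
    exact add_pow_char_pow x y p (k * j)
  have hfrobs : ∀ (j : ℕ) (x y : F), (x - y) ^ q ^ j = x ^ q ^ j - y ^ q ^ j := by
    intro j x y
    rw [← hpk, ← pow_mul]
    exact sub_pow_char_pow x y (k * j)
  have hxq : ∀ x : F, x ^ q ^ n = x := by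
    intro x; rw [← hF]; exact FiniteField.pow_card x
  have hone : ∀ x : F, x ≠ 0 → x ^ ((q - 1) * e) = 1 := by
    intro x hx
    have h1 : q ^ n - 1 = (q - 1) * e := by rw [← he]; exact Nat.add_sub_cancel _ _
    have h2 := FiniteField.pow_card_sub_one_eq_one x hx
    rwa [hF, h1] at h2
  have hstep : ∀ x : F, x ≠ 0 → x ^ (q * e) = x ^ e := by
    intro x hx
    have hqe : q * e = (q - 1) * e + e := by
      have h1 : q = (q - 1) + 1 := by omega
      conv_lhs => rw [h1]
      rw [Nat.succ_mul]
    rw [hqe, pow_add, hone x hx, one_mul]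
  have hqje : ∀ (x : F), x ≠ 0 → ∀ j, x ^ (q ^ j * e) = x ^ e := by
    intro x hx j
    induction j with
    | zero => rw [pow_zero, one_mul]
    | succ j ih =>
      rw [show q ^ (j + 1) * e = q * e * q ^ j by ring, pow_mul, hstep x hx, ← pow_mul,
        show e * q ^ j = q ^ j * e by ring, ih]
  -- L is injective
  have hL0 : L 0 = 0 := by
    rw [hL]
    simp [zero_pow (show q ^ (n - 1) ≠ 0 by positivity)]
  have hLinj : Function.Injective L := by
    intro x y hxy
    by_contra hne
    have hw : x - y ≠ 0 := sub_ne_zero.2 hne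
    rw [hL x, hL y] at hxy
    have h1 : (x - y) ^ q ^ (n - 1) = -a * (x - y) := by
      rw [hfrobs (n - 1) x y]
      linear_combination hxy
    have h2 : ((x - y) ^ q ^ (n - 1)) ^ e = (-a * (x - y)) ^ e := by rw [h1]
    rw [← pow_mul, hqje _ hw (n - 1), mul_pow] at h2
    have hwe : (x - y) ^ e ≠ 0 := pow_ne_zero _ hw
    have h3 : (-a) ^ e = 1 :=
      mul_right_cancel₀ hwe (by rw [one_mul]; exact h2.symm)
    exact hNa' h3
  have hLbij : Function.Bijective L := Finite.injective_iff_bijective.1 hLinj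
  have hLne : ∀ x : F, x ≠ 0 → L x ≠ 0 := by
    intro x hx h0
    exact hx (hLinj (h0.trans hL0.symm))
  -- the key injectivity
  have hGinj : ∀ y z : F, y * ((L y)⁻¹) ^ (q + 1) = z * ((L z)⁻¹) ^ (q + 1) → y = z := by
    intro y z h
    rcases eq_or_ne y 0 with hy | hy
    · subst hy
      rcases eq_or_ne z 0 with hz | hz
      · exact hz.symm
      · exfalso
        rw [zero_mul] at h
        exact (mul_ne_zero hz (pow_ne_zero _ (inv_ne_zero (hLne z hz)))) h.symm
    rcases eq_or_ne z 0 with hz | hz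
    · exfalso
      rw [hz, zero_mul] at h
      exact (mul_ne_zero hy (pow_ne_zero _ (inv_ne_zero (hLne y hy)))) h
    have hLy := hLne y hy
    have hLz := hLne z hz
    have h' : y * (L z) ^ (q + 1) = z * (L y) ^ (q + 1) := by
      rw [inv_pow, inv_pow] at h
      have e1 : (L y) ^ (q + 1) * ((L y) ^ (q + 1))⁻¹ = 1 := mul_inv_cancel₀ (pow_ne_zero _ hLy)
      have e2 : (L z) ^ (q + 1) * ((L z) ^ (q + 1))⁻¹ = 1 := mul_inv_cancel₀ (pow_ne_zero _ hLz)
      linear_combination ((L y) ^ (q + 1) * (L z) ^ (q + 1)) * h - (y * (L z) ^ (q + 1)) * e1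
        + (z * (L y) ^ (q + 1)) * e2
    -- substitutions
    set t := y ^ q ^ (n - 1) with ht_def
    set s := z ^ q ^ (n - 1) with hs_def
    clear_value t s
    have ht0 : t ≠ 0 := ht_def ▸ pow_ne_zero _ hy
    have hs0 : s ≠ 0 := hs_def ▸ pow_ne_zero _ hz
    have hty : t ^ q = y := by
      rw [ht_def, ← pow_mul, ← pow_succ, Nat.sub_add_cancel hn, hxq]
    have hsz : s ^ q = z := by
      rw [hs_def, ← pow_mul, ← pow_succ, Nat.sub_add_cancel hn, hxq]
    set u := t ^ q * t⁻¹ with hu_def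
    set v := s ^ q * s⁻¹ with hv_def
    clear_value u v
    have hu0 : u ≠ 0 := hu_def ▸ mul_ne_zero (pow_ne_zero _ ht0) (inv_ne_zero ht0)
    have hv0 : v ≠ 0 := hv_def ▸ mul_ne_zero (pow_ne_zero _ hs0) (inv_ne_zero hs0)
    have hue : u ^ e = 1 := by
      rw [hu_def, mul_pow, inv_pow, ← pow_mul, hstep t ht0]
      exact mul_inv_cancel₀ (pow_ne_zero _ ht0)
    have hve : v ^ e = 1 := by
      rw [hv_def, mul_pow, inv_pow, ← pow_mul, hstep s hs0]
      exact mul_inv_cancel₀ (pow_ne_zero _ hs0)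
    have hAe : ∀ c : F, c ^ e = 1 → 1 + a * c ≠ 0 := by
      intro c hc h0
      have h1 : a * c = -1 := by linear_combination h0
      have h2 : (a * c) ^ e = (-1 : F) ^ e := by rw [h1]
      rw [mul_pow, hc, mul_one] at h2
      apply hNa'
      calc (-a) ^ e = ((-1) * a) ^ e := by ring_nf
        _ = (-1 : F) ^ e * a ^ e := mul_pow _ _ _
        _ = (-1 : F) ^ e * (-1 : F) ^ e := by rw [h2]
        _ = ((-1 : F) * (-1)) ^ e := (mul_pow _ _ _).symm
        _ = 1 := by norm_num
    set A := 1 + a * u with hA_def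
    set B := 1 + a * v with hB_def
    clear_value A B
    have hA0 : A ≠ 0 := hA_def ▸ hAe u hue
    have hB0 : B ≠ 0 := hB_def ▸ hAe v hve
    have hLyA : L y = t * A := by
      rw [hL y, ← ht_def, hA_def, hu_def, ← hty]
      field_simp
    have hLzB : L z = s * B := by
      rw [hL z, ← hs_def, hB_def, hv_def, ← hsz]
      field_simp
    have E1 : s * B ^ (q + 1) = t * A ^ (q + 1) := by
      apply mul_left_cancel₀ (mul_ne_zero (pow_ne_zero q ht0) (pow_ne_zero q hs0))
      rw [hLyA, hLzB, ← hty, ← hsz] at h'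
      calc t ^ q * s ^ q * (s * B ^ (q + 1)) = t ^ q * (s * B) ^ (q + 1) := by
            rw [mul_pow, pow_succ]; ring
        _ = s ^ q * (t * A) ^ (q + 1) := h'
        _ = t ^ q * s ^ q * (t * A ^ (q + 1)) := by rw [mul_pow, pow_succ]; ring
    -- the reduced equation (**)
    have hut : t ^ q = u * t := by rw [hu_def]; field_simp
    have hvs : s ^ q = v * s := by rw [hv_def]; field_simp
    have E2 : s ^ q * (B ^ (q + 1)) ^ q = t ^ q * (A ^ (q + 1)) ^ q := by
      have := congrArg (· ^ q) E1
      simpa [mul_pow] using this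
    have E3 : (s ^ q * (B ^ (q + 1)) ^ q) * (t * A ^ (q + 1)) =
        (t ^ q * (A ^ (q + 1)) ^ q) * (s * B ^ (q + 1)) := by
      rw [E2, E1]
    have hAexp : (A ^ (q + 1)) ^ q = A ^ q ^ 2 * A ^ q := by
      rw [← pow_mul, ← pow_add]
      congr 1
      ring
    have hBexp : (B ^ (q + 1)) ^ q = B ^ q ^ 2 * B ^ q := by
      rw [← pow_mul, ← pow_add]
      congr 1
      ring
    rw [hut, hvs, hAexp, hBexp, pow_succ A q, pow_succ B q] at E3
    have hstar : v * B ^ q ^ 2 * A = u * A ^ q ^ 2 * B := by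
      apply mul_right_cancel₀ (show s * t * A ^ q * B ^ q ≠ 0 from
        mul_ne_zero (mul_ne_zero (mul_ne_zero hs0 ht0) (pow_ne_zero _ hA0)) (pow_ne_zero _ hB0))
      linear_combination E3
    -- frobenius expansion and factoring
    have hAq2 : A ^ q ^ 2 = 1 + a ^ q ^ 2 * u ^ q ^ 2 := by
      rw [hA_def, hfrob 2 1 (a * u), one_pow, mul_pow]
    have hBq2 : B ^ q ^ 2 = 1 + a ^ q ^ 2 * v ^ q ^ 2 := by
      rw [hB_def, hfrob 2 1 (a * v), one_pow, mul_pow]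
    by_cases huv : u = v
    · have hAB : A = B := by rw [hA_def, hB_def, huv]
      rw [← hAB] at E1
      have hst : s = t := mul_right_cancel₀ (pow_ne_zero _ hA0) E1
      rw [← hty, ← hsz, hst]
    · have hDne : u - v ≠ 0 := sub_ne_zero.2 huv
      have hDq2 : (u - v) ^ q ^ 2 = u ^ q ^ 2 - v ^ q ^ 2 := hfrobs 2 u v
      have h5 : (u - v) * A ^ q ^ 2 = -((u - v) ^ q ^ 2 * a ^ q ^ 2 * v * A) := by
        rw [hAq2, hDq2, hA_def]
        rw [hAq2, hBq2, hA_def, hB_def] at hstar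
        linear_combination -hstar
      have h6 : ((u - v) * A ^ q ^ 2) ^ e = (-((u - v) ^ q ^ 2 * a ^ q ^ 2 * v * A)) ^ e := by
        rw [h5]
      rw [mul_pow, ← pow_mul A, hqje A hA0 2, neg_pow, mul_pow, mul_pow, mul_pow,
        ← pow_mul (u - v), ← pow_mul a, hqje (u - v) hDne 2, hqje a ha 2, hve, mul_one] at h6
      exfalso
      apply hNa'
      have hne6 : (u - v) ^ e * A ^ e ≠ 0 :=
        mul_ne_zero (pow_ne_zero _ hDne) (pow_ne_zero _ hA0)
      have h7 : (-1 : F) ^ e * a ^ e = 1 := by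
        apply mul_right_cancel₀ hne6
        rw [one_mul]
        linear_combination -h6
      calc (-a) ^ e = ((-1) * a) ^ e := by ring_nf
        _ = (-1 : F) ^ e * a ^ e := mul_pow _ _ _
        _ = 1 := h7
  -- conclude
  have hinvL : ∀ y, Function.invFun L (L y) = y := fun y =>
    Function.leftInverse_invFun hLinj y
  have hfinj : Function.Injective (fun x : F => Function.invFun L x * (x⁻¹) ^ (q + 1)) := by
    intro x₁ x₂ hx
    obtain ⟨y₁, rfl⟩ := hLbij.2 x₁
    obtain ⟨y₂, rfl⟩ := hLbij.2 x₂
    simp only [hinvL] at hx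
    exact congrArg L (hGinj y₁ y₂ hx)
  exact ⟨hLbij, Finite.injective_iff_bijective.1 hfinj⟩
end

section
/- Let q be a prime power, n an odd positive integer, r = ∑_{i=0}^{(n-1)/2} q^{2i} and s = ∑_{i=1}^{(n-1)/2} q^{2i-1}. Let a ∈ F_{q^n} be nonzero with N(-a) ≠ 1, where N(x) = ∏_{i=0}^{n-1} x^{q^i}. Let L be the inverse map of x ↦ x^{q^{n-1}} + a·x and ℓ the inverse map of x ↦ x^{q^{n-1}} + a·x^q (both of which are bijections of F_{q^n}). Then the map f : x ↦ L(x)·x^{-(q+1)} (where x^{-1} denotes x^{q^n-2}, so 0 maps to 0) is a bijection of F_{q^n}, and its inverse map is g : x ↦ ℓ(x^s)·x^{-r}; that is, g(f(x)) = x for all x ∈ F_{q^n}. -/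
/-- For odd `n`, `r = ∑_{i=0}^{(n-1)/2} q^{2i}`, `s = ∑_{i=1}^{(n-1)/2} q^{2i-1}`,
and `a ≠ 0` with `N(-a) ≠ 1`, if `L` is the inverse map of `x ↦ x^{q^{n-1}} + a·x` and `ℓ` is
the inverse map of `x ↦ x^{q^{n-1}} + a·x^q`, then `f : x ↦ L(x)·x^{-(q+1)}` is a bijection of
`F_{q^n}` with inverse `g : x ↦ ℓ(x^s)·x^{-r}`. -/
theorem stmt_7 (q n : ℕ) (hq : IsPrimePow q) (hn : Odd n)
    (F : Type*) [Field F] [Fintype F] (hF : Fintype.card F = q ^ n)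
    (r s : ℕ) (hr : r = ∑ i ∈ Finset.range ((n - 1) / 2 + 1), q ^ (2 * i))
    (hs : s = ∑ i ∈ Finset.range ((n - 1) / 2), q ^ (2 * (i + 1) - 1))
    (a : F) (ha : a ≠ 0) (hNa : ∏ i ∈ Finset.range n, (-a) ^ q ^ i ≠ 1)
    (L : F → F) (hL1 : ∀ x : F, L (x ^ q ^ (n - 1) + a * x) = x)
    (hL2 : ∀ x : F, (L x) ^ q ^ (n - 1) + a * L x = x)
    (ℓ : F → F) (hl1 : ∀ x : F, ℓ (x ^ q ^ (n - 1) + a * x ^ q) = x)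
    (hl2 : ∀ x : F, (ℓ x) ^ q ^ (n - 1) + a * (ℓ x) ^ q = x) :
    (Function.Bijective fun x : F => L x * (x⁻¹) ^ (q + 1)) ∧
      ∀ x : F,
        ℓ ((L x * (x⁻¹) ^ (q + 1)) ^ s) * ((L x * (x⁻¹) ^ (q + 1))⁻¹) ^ r = x := by
  obtain ⟨m, hm⟩ : ∃ m, n = 2 * m + 1 := by obtain ⟨k, hk⟩ := hn; exact ⟨k, by omega⟩
  have hm2 : (n - 1) / 2 = m := by omega
  rw [hm2] at hr hs
  have hq0 : q ≠ 0 := hq.pos.ne'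
  have hQ0 : q ^ (n - 1) ≠ 0 := pow_ne_zero _ hq0
  have h1 : q * s + 1 = r := by
    rw [hr, hs, Finset.mul_sum, Finset.sum_range_succ']
    simp only [mul_zero, pow_zero]
    congr 1
    refine Finset.sum_congr rfl fun i _ => ?_
    rw [← pow_succ']
    congr 1 <;> omega
  have h2 : q * r = s + q ^ n := by
    rw [hr, hs, Finset.mul_sum, Finset.sum_range_succ]
    congr 1
    · refine Finset.sum_congr rfl fun i _ => ?_
      rw [← pow_succ']; congr 1 <;> omega
    · rw [← pow_succ']; congr 1 <;> omega
  have h3 : r * q ^ (n - 1) = q ^ n * s + q ^ (n - 1) := by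
    rw [hr, hs, Finset.sum_mul, Finset.sum_range_succ', Finset.mul_sum]
    congr 1
    · refine Finset.sum_congr rfl fun i _ => ?_
      rw [← pow_add, ← pow_add]; congr 1 <;> omega
    · simp
  have hFrob : ∀ z : F, z ^ q ^ n = z := by
    intro z; rw [← hF]; exact FiniteField.pow_card z
  have hr0 : r ≠ 0 := by rw [← h1]; exact Nat.succ_ne_zero _
  have main : ∀ x : F,
      ℓ ((L x * (x⁻¹) ^ (q + 1)) ^ s) * ((L x * (x⁻¹) ^ (q + 1))⁻¹) ^ r = x := by
    intro x
    rcases eq_or_ne x 0 with rfl | hx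
    · have hL0 : L 0 = 0 := by
        have h := hL1 0
        rwa [zero_pow hQ0, mul_zero, add_zero] at h
      rw [hL0, zero_mul, inv_zero, zero_pow hr0, mul_zero]
    · have hy := hL2 x
      have hy0 : L x ≠ 0 := by
        intro h
        apply hx
        rw [← hL2 x, h, zero_pow hQ0, mul_zero, add_zero]
      set y := L x with hydef
      set u := x⁻¹ with hudef
      have hu : u ≠ 0 := by rw [hudef]; exact inv_ne_zero hx
      have hxu : x * u = 1 := by rw [hudef]; exact mul_inv_cancel₀ hx
      have hf0 : y * u ^ (q + 1) ≠ 0 := mul_ne_zero hy0 (pow_ne_zero _ hu)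
      have hEq : (r + s) * q + 1 = (r + s) + q ^ n := by
        calc (r + s) * q + 1 = q * r + (q * s + 1) := by ring
          _ = (s + q ^ n) + r := by rw [h1, h2]
          _ = (r + s) + q ^ n := by ring
      have hcq : (u ^ (r + s)) ^ q = u ^ (r + s) := by
        apply mul_right_cancel₀ hu
        rw [← pow_mul, ← pow_succ, hEq, pow_add, hFrob]
      have fix : ∀ k, (u ^ (r + s)) ^ q ^ k = u ^ (r + s) := by
        intro k
        induction k with
        | zero => simp
        | succ k ih => rw [pow_succ, pow_mul, ih, hcq]
      have hqr : (q + 1) * r = (r + s) + q ^ n := by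
        calc (q + 1) * r = q * r + r := by ring
          _ = (r + s) + q ^ n := by rw [h2]; ring
      have hA : x * (y * u ^ (q + 1)) ^ r = y ^ r * u ^ (r + s) := by
        have h : x * (y * u ^ (q + 1)) ^ r = y ^ r * u ^ (r + s) * (x * u) := by
          rw [mul_pow, ← pow_mul, hqr, pow_add, hFrob]; ring
        rw [h, hxu, mul_one]
      have hB : (y ^ r * u ^ (r + s)) ^ q = y ^ s * y * u ^ (r + s) := by
        rw [mul_pow, hcq, ← pow_mul, show r * q = s + q ^ n from by rw [mul_comm]; exact h2,
          pow_add, hFrob]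
      have hC : (y ^ r * u ^ (r + s)) ^ q ^ (n - 1)
          = y ^ s * y ^ q ^ (n - 1) * u ^ (r + s) := by
        rw [mul_pow, fix (n - 1), ← pow_mul, h3, pow_add, pow_mul, hFrob]
      have hqs : (q + 1) * s + 1 = r + s := by
        calc (q + 1) * s + 1 = (q * s + 1) + s := by ring
          _ = r + s := by rw [h1]
      have hD : y ^ s * u ^ (r + s) * x = (y * u ^ (q + 1)) ^ s := by
        have h : y ^ s * u ^ (r + s) * x = y ^ s * u ^ ((q + 1) * s) * (x * u) := by
          rw [← hqs, pow_succ]; ring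
        rw [h, hxu, mul_one, mul_pow, ← pow_mul]
      have hM : (x * (y * u ^ (q + 1)) ^ r) ^ q ^ (n - 1)
          + a * (x * (y * u ^ (q + 1)) ^ r) ^ q = (y * u ^ (q + 1)) ^ s := by
        rw [hA, hB, hC, ← hD, ← hy]
        ring
      have hl := hl1 (x * (y * u ^ (q + 1)) ^ r)
      rw [hM] at hl
      rw [hl, mul_assoc, ← mul_pow, mul_inv_cancel₀ hf0, one_pow, mul_one]
  refine ⟨?_, main⟩
  have hinj : Function.Injective (fun x : F => L x * (x⁻¹) ^ (q + 1)) :=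
    Function.LeftInverse.injective
      (g := fun z : F => ℓ (z ^ s) * (z⁻¹) ^ r) (fun x => main x)
  exact Finite.injective_iff_bijective.mp hinj
end

section
/- Let q be a prime power, n a positive integer, and a ∈ F_{q^n} nonzero with N(-a) ≠ 1, where N(x) = ∏_{i=0}^{n-1} x^{q^i}. Let L be the inverse map of x ↦ x^q + a·x and ℓ the inverse map of x ↦ a·x^q + x (both of which are bijections of F_{q^n}). Then the map f : x ↦ L(x^{q+1})·x^{-1} (where x^{-1} denotes x^{q^n-2}, so 0 maps to 0) is a bijection of F_{q^n} with inverse map g : x ↦ x^{-1}·(ℓ(x^{-(q+1)}))^{-1}, and likewise the map x ↦ ℓ(x^{q+1})·x^{-1} is a bijection of F_{q^n} with inverse map x ↦ x^{-1}·(L(x^{-(q+1)}))^{-1}. -/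
lemma key_aux {F : Type*} [Field F] (q : ℕ) (hq : q ≠ 0) (c d : F)
    (A B : F → F) (hA : ∀ x : F, c * (A x) ^ q + d * (A x) = x)
    (hB : ∀ x : F, B (d * x ^ q + c * x) = x) (x : F) :
    (A (x ^ (q + 1)) * x⁻¹)⁻¹ * (B (((A (x ^ (q + 1)) * x⁻¹)⁻¹) ^ (q + 1)))⁻¹ = x := by
  by_cases hx : x = 0
  · simp [hx]
  set y := A (x ^ (q + 1)) with hy
  have hyx : c * y ^ q + d * y = x ^ (q + 1) := hA _
  have hy0 : y ≠ 0 := by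
    intro h
    rw [h] at hyx
    simp [zero_pow hq] at hyx
    exact hx (pow_eq_zero_iff (Nat.succ_ne_zero q) |>.mp hyx.symm)
  have h1 : (y * x⁻¹)⁻¹ = x * y⁻¹ := by
    rw [mul_inv, inv_inv, mul_comm]
  have h2 : (x * y⁻¹) ^ (q + 1) = d * (y⁻¹) ^ q + c * y⁻¹ := by
    have : (x * y⁻¹) ^ (q + 1) = (c * y ^ q + d * y) * (y⁻¹) ^ (q + 1) := by
      rw [hyx, mul_pow]
    rw [this]
    have e1 : y * y⁻¹ = 1 := mul_inv_cancel₀ hy0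
    have e2 : y ^ q * y⁻¹ ^ q = 1 := by rw [← mul_pow, e1, one_pow]
    rw [pow_succ]
    linear_combination (c * y⁻¹) * e2 + (d * y⁻¹ ^ q) * e1
  rw [h1, h2, hB]
  field_simp

/-- For `a ≠ 0` with `N(-a) ≠ 1`, if `L` is the inverse map of `x ↦ x^q + a·x`
and `ℓ` is the inverse map of `x ↦ a·x^q + x`, then `f : x ↦ L(x^{q+1})·x^{-1}` is a bijection
of `F_{q^n}` with inverse `g : x ↦ x^{-1}·(ℓ(x^{-(q+1)}))^{-1}`, and likewise
`x ↦ ℓ(x^{q+1})·x^{-1}` is a bijection with inverse `x ↦ x^{-1}·(L(x^{-(q+1)}))^{-1}`. -/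
theorem stmt_8 (q n : ℕ) (hq : IsPrimePow q) (hn : 0 < n)
    (F : Type*) [Field F] [Fintype F] (hF : Fintype.card F = q ^ n)
    (a : F) (ha : a ≠ 0) (hNa : ∏ i ∈ Finset.range n, (-a) ^ q ^ i ≠ 1)
    (L : F → F) (hL1 : ∀ x : F, L (x ^ q + a * x) = x)
    (hL2 : ∀ x : F, (L x) ^ q + a * L x = x)
    (ℓ : F → F) (hl1 : ∀ x : F, ℓ (a * x ^ q + x) = x)
    (hl2 : ∀ x : F, a * (ℓ x) ^ q + ℓ x = x) :
    (Function.Bijective fun x : F => L (x ^ (q + 1)) * x⁻¹) ∧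
    (∀ x : F,
      (L (x ^ (q + 1)) * x⁻¹)⁻¹ * (ℓ (((L (x ^ (q + 1)) * x⁻¹)⁻¹) ^ (q + 1)))⁻¹ = x) ∧
    (Function.Bijective fun x : F => ℓ (x ^ (q + 1)) * x⁻¹) ∧
    (∀ x : F,
      (ℓ (x ^ (q + 1)) * x⁻¹)⁻¹ * (L (((ℓ (x ^ (q + 1)) * x⁻¹)⁻¹) ^ (q + 1)))⁻¹ = x) := by
  have hq0 : q ≠ 0 := hq.pos.ne'
  have key1 : ∀ x : F,
      (L (x ^ (q + 1)) * x⁻¹)⁻¹ * (ℓ (((L (x ^ (q + 1)) * x⁻¹)⁻¹) ^ (q + 1)))⁻¹ = x := by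
    intro x
    exact key_aux q hq0 1 a L ℓ (fun t => by simpa using hL2 t)
      (fun t => by simpa using hl1 t) x
  have key2 : ∀ x : F,
      (ℓ (x ^ (q + 1)) * x⁻¹)⁻¹ * (L (((ℓ (x ^ (q + 1)) * x⁻¹)⁻¹) ^ (q + 1)))⁻¹ = x := by
    intro x
    exact key_aux q hq0 a 1 ℓ L (fun t => by simpa using hl2 t)
      (fun t => by simpa using hL1 t) x
  have hbij1 : Function.Bijective fun x : F => L (x ^ (q + 1)) * x⁻¹ :=
    Finite.injective_iff_bijective.mp
      (Function.LeftInverse.injective (g := fun z : F => z⁻¹ * (ℓ ((z⁻¹) ^ (q + 1)))⁻¹) key1)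
  have hbij2 : Function.Bijective fun x : F => ℓ (x ^ (q + 1)) * x⁻¹ :=
    Finite.injective_iff_bijective.mp
      (Function.LeftInverse.injective (g := fun z : F => z⁻¹ * (L ((z⁻¹) ^ (q + 1)))⁻¹) key2)
  exact ⟨hbij1, key1, hbij2, key2⟩
end

section
/- Let q be a prime power, n a positive integer, and L(x) = ∑_{i=0}^{n-1} a_i x^{q^i} a q-linear polynomial over F_{q^n}. Suppose there exist a nonzero β ∈ F_{q^n} and a divisor k of n such that L(x^{q+1})^{q+1} ∈ β·F_{q^k} for all x ∈ F_{q^n}, that the map ℓ : F_{q^n} → F_{q^n} defined by ℓ(x) = β^{-1}·L(β x)^q is q^k-linear (i.e., ℓ(x) = ∑_j b_j x^{q^{k j}} for some b_j ∈ F_{q^n}), and that L(x^{q+1}) ≠ 0 for all nonzero x ∈ F_{q^n}. Then the map f : x ↦ L(x^{q+1})·x^{-1} (where x^{-1} denotes x^{q^n-2}, so 0 maps to 0) is a bijection of F_{q^n} with inverse map g : x ↦ x^{-1}·(ℓ(x^{-(q+1)}))^{-1}, and the map x ↦ ℓ(x^{q+1})·x^{-1} is a bijection of F_{q^n} with inverse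 map x ↦ x^{-1}·(L(x^{-(q+1)}))^{-1}. -/
/-- If the image of `L(x^{q+1})^{q+1}` lies in `β·F_{q^k}` for some `β ≠ 0` and
`k ∣ n`, the map `ℓ(x) = β^{-1}·L(βx)^q` is `q^k`-linear, and `L(x^{q+1})` has no nonzero root,
then `x ↦ L(x^{q+1})·x^{-1}` is a bijection of `F_{q^n}` with inverse
`x ↦ x^{-1}·(ℓ(x^{-(q+1)}))^{-1}`, and `x ↦ ℓ(x^{q+1})·x^{-1}` is a bijection with inverse
`x ↦ x^{-1}·(L(x^{-(q+1)}))^{-1}`. -/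
theorem stmt_9 (q n k : ℕ) (hq : IsPrimePow q) (hn : 0 < n) (hk : 0 < k) (hkn : k ∣ n)
    (F : Type*) [Field F] [Fintype F] (hF : Fintype.card F = q ^ n)
    (a : ℕ → F) (L : F → F) (hL : ∀ x, L x = ∑ i ∈ Finset.range n, a i * x ^ q ^ i)
    (β : F) (hβ : β ≠ 0)
    (hsub : ∀ x : F, ∃ z : F, z ^ q ^ k = z ∧ (L (x ^ (q + 1))) ^ (q + 1) = β * z)
    (ℓ : F → F) (hℓ : ∀ x, ℓ x = β⁻¹ * (L (β * x)) ^ q)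
    (hlin : ∃ b : ℕ → F, ∀ x, ℓ x = ∑ j ∈ Finset.range (n / k), b j * x ^ (q ^ k) ^ j)
    (hroot : ∀ x : F, x ≠ 0 → L (x ^ (q + 1)) ≠ 0) :
    (Function.Bijective fun x : F => L (x ^ (q + 1)) * x⁻¹) ∧
    (∀ x : F,
      (L (x ^ (q + 1)) * x⁻¹)⁻¹ * (ℓ (((L (x ^ (q + 1)) * x⁻¹)⁻¹) ^ (q + 1)))⁻¹ = x) ∧
    (Function.Bijective fun x : F => ℓ (x ^ (q + 1)) * x⁻¹) ∧
    (∀ x : F,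
      (ℓ (x ^ (q + 1)) * x⁻¹)⁻¹ * (L (((ℓ (x ^ (q + 1)) * x⁻¹)⁻¹) ^ (q + 1)))⁻¹ = x) := by
  classical
  have hq2 : 2 ≤ q := hq.two_le
  have hq0 : q ≠ 0 := by omega
  -- x ↦ x^q is injective on F
  have hpowinj : ∀ x y : F, x ^ q = y ^ q → x = y := by
    have hco : Nat.gcd q (q ^ n - 1) = 1 := by
      have h1 : q ∣ q ^ n := dvd_pow_self q hn.ne'
      have h2 : Nat.Coprime (q ^ n) (q ^ n - 1) := by
        have h1' : 1 ≤ q ^ n := Nat.one_le_pow _ _ (by omega)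
        have d1 := Nat.gcd_dvd_left (q ^ n) (q ^ n - 1)
        have d2 := Nat.gcd_dvd_right (q ^ n) (q ^ n - 1)
        have d3 := Nat.dvd_sub d1 d2
        rw [Nat.sub_sub_self h1'] at d3
        exact Nat.dvd_one.mp d3
      exact Nat.Coprime.coprime_dvd_left h1 h2
    intro x y hxy
    rcases eq_or_ne y 0 with rfl | hy
    · rw [zero_pow hq0, pow_eq_zero_iff hq0] at hxy; exact hxy
    rcases eq_or_ne x 0 with rfl | hx
    · rw [zero_pow hq0] at hxy
      exact absurd (pow_eq_zero_iff hq0 |>.mp hxy.symm) hy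
    have hu : (x * y⁻¹) ^ q = 1 := by
      rw [mul_pow, inv_pow, hxy, mul_inv_cancel₀ (pow_ne_zero _ hy)]
    have hu2 : (x * y⁻¹) ^ (q ^ n - 1) = 1 := by
      have := FiniteField.pow_card_sub_one_eq_one (x * y⁻¹)
        (mul_ne_zero hx (inv_ne_zero hy))
      rwa [hF] at this
    have := pow_gcd_eq_one.mpr ⟨hu, hu2⟩
    rw [hco, pow_one] at this
    field_simp at this
    exact this
  obtain ⟨b, hb⟩ := hlin
  -- scalars fixed by q^k-Frobenius pull out of ℓ
  have hfix : ∀ c : F, c ^ q ^ k = c → ∀ j : ℕ, c ^ (q ^ k) ^ j = c := by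
    intro c hc j
    induction j with
    | zero => simp
    | succ j ih => rw [pow_succ, pow_mul, ih, hc]
  have hpull : ∀ c u : F, c ^ q ^ k = c → ℓ (c * u) = c * ℓ u := by
    intro c u hc
    rw [hb, hb, Finset.mul_sum]
    refine Finset.sum_congr rfl fun j _ => ?_
    rw [mul_pow, hfix c hc j]; ring
  -- basic relations between L and ℓ
  have hβL : ∀ u : F, L (β * u) ^ q = β * ℓ u := by
    intro u
    rw [hℓ, ← mul_assoc, mul_inv_cancel₀ hβ, one_mul]
  have hLs : ∀ s : F, ℓ (β⁻¹ * s) = β⁻¹ * L s ^ q := by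
    intro s
    rw [hℓ, ← mul_assoc, mul_inv_cancel₀ hβ, one_mul]
  -- data from x = 1
  have h1 : (1 : F) ^ (q + 1) = 1 := one_pow _
  have hL1 : L 1 ≠ 0 := by
    have := hroot 1 one_ne_zero
    rwa [h1] at this
  obtain ⟨z₁, hz₁fix, hz₁⟩ := hsub 1
  rw [h1] at hz₁
  have hz₁0 : z₁ ≠ 0 := by
    intro h
    rw [h, mul_zero] at hz₁
    exact pow_ne_zero _ hL1 hz₁
  -- first key identity
  have key1 : ∀ x : F,
      (L (x ^ (q + 1)) * x⁻¹)⁻¹ * (ℓ (((L (x ^ (q + 1)) * x⁻¹)⁻¹) ^ (q + 1)))⁻¹ = x := by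
    intro x
    rcases eq_or_ne x 0 with rfl | hx
    · simp
    have hA0 : L (x ^ (q + 1)) ≠ 0 := hroot x hx
    set A := L (x ^ (q + 1)) with hA
    obtain ⟨z, hzfix, hz⟩ := hsub x
    rw [← hA] at hz
    have hz0 : z ≠ 0 := by
      intro h
      rw [h, mul_zero] at hz
      exact pow_ne_zero _ hA0 hz
    have hyinv : (A * x⁻¹)⁻¹ = x * A⁻¹ := by
      rw [mul_inv, inv_inv, mul_comm]
    have hstep : ((A * x⁻¹)⁻¹) ^ (q + 1) = z⁻¹ * (β⁻¹ * x ^ (q + 1)) := by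
      rw [hyinv, mul_pow, inv_pow, hz, mul_inv]
      ring
    have hzinvfix : (z⁻¹ : F) ^ q ^ k = z⁻¹ := by rw [inv_pow, hzfix]
    have hℓval : ℓ (((A * x⁻¹)⁻¹) ^ (q + 1)) = z⁻¹ * (β⁻¹ * A ^ q) := by
      rw [hstep, hpull _ _ hzinvfix, hLs, ← hA]
    rw [hℓval, hyinv]
    have hAq : A ^ q * A = β * z := by rw [← pow_succ, hz]
    have hAq' : A ^ q = β * z * A⁻¹ := by
      rw [← hAq, mul_assoc, mul_inv_cancel₀ hA0, mul_one]
    rw [hAq']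
    field_simp
  -- second key identity
  have key2 : ∀ x : F,
      (ℓ (x ^ (q + 1)) * x⁻¹)⁻¹ * (L (((ℓ (x ^ (q + 1)) * x⁻¹)⁻¹) ^ (q + 1)))⁻¹ = x := by
    intro x
    rcases eq_or_ne x 0 with rfl | hx
    · simp
    set v := L 1 * x with hv
    have hv0 : v ≠ 0 := mul_ne_zero hL1 hx
    have hC0 : L (v ^ (q + 1)) ≠ 0 := hroot v hv0
    set C := L (v ^ (q + 1)) with hC
    obtain ⟨zv, hzvfix, hzv⟩ := hsub v
    rw [← hC] at hzv
    have hzv0 : zv ≠ 0 := by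
      intro h
      rw [h, mul_zero] at hzv
      exact pow_ne_zero _ hC0 hzv
    have hx1 : x ^ (q + 1) = z₁⁻¹ * (β⁻¹ * v ^ (q + 1)) := by
      rw [hv, mul_pow, hz₁]
      field_simp
    have hz₁invfix : (z₁⁻¹ : F) ^ q ^ k = z₁⁻¹ := by rw [inv_pow, hz₁fix]
    have hBval : ℓ (x ^ (q + 1)) = z₁⁻¹ * (β⁻¹ * C ^ q) := by
      rw [hx1, hpull _ _ hz₁invfix, hLs, ← hC]
    set B := ℓ (x ^ (q + 1)) with hB
    have hB0 : B ≠ 0 := by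
      rw [hBval]
      exact mul_ne_zero (inv_ne_zero hz₁0)
        (mul_ne_zero (inv_ne_zero hβ) (pow_ne_zero _ hC0))
    have hwinv : (B * x⁻¹)⁻¹ = x * B⁻¹ := by
      rw [mul_inv, inv_inv, mul_comm]
    have hCq : (C ^ q) ^ (q + 1) = β ^ q * zv ^ q := by
      rw [← pow_mul, mul_comm q (q + 1), pow_mul, hzv, mul_pow]
    -- the scalar c = z₁^q * (zv^q)⁻¹ is fixed by q^k-Frobenius
    have hcfix : (z₁ ^ q * (zv ^ q)⁻¹ : F) ^ q ^ k = z₁ ^ q * (zv ^ q)⁻¹ := by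
      rw [mul_pow, inv_pow, pow_right_comm z₁ q, hz₁fix, pow_right_comm zv q, hzvfix]
    have hW : ((B * x⁻¹)⁻¹) ^ (q + 1)
        = β * ((z₁ ^ q * (zv ^ q)⁻¹) * (β⁻¹ * v ^ (q + 1))) := by
      rw [hwinv, mul_pow, inv_pow]
      have hBpow : B ^ (q + 1) = z₁⁻¹ ^ (q + 1) * (β⁻¹ * zv ^ q) := by
        rw [hBval, mul_pow, mul_pow, hCq]
        simp only [inv_pow]
        field_simp
        ring
      rw [hBpow, hx1]
      simp only [inv_pow]
      field_simp
      ring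
    have hLW : L (((B * x⁻¹)⁻¹) ^ (q + 1)) ^ q = (B⁻¹) ^ q := by
      rw [hW, hβL, hpull _ _ hcfix, hLs, ← hC, hBval]
      simp only [inv_pow]
      field_simp
      have e1 : z₁ ^ q * z₁⁻¹ ^ q = 1 := by rw [← mul_pow, mul_inv_cancel₀ hz₁0, one_pow]
      have e2 : β ^ q * β⁻¹ ^ q = 1 := by rw [← mul_pow, mul_inv_cancel₀ hβ, one_pow]
      linear_combination (z₁ ^ q * z₁⁻¹ ^ q * β⁻¹ ^ q) * hCq
        + zv ^ q * β ^ q * β⁻¹ ^ q * e1 + zv ^ q * e2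
    have hLWeq : L (((B * x⁻¹)⁻¹) ^ (q + 1)) = B⁻¹ := hpowinj _ _ hLW
    rw [hLWeq, hwinv, inv_inv]
    field_simp
  -- assemble
  refine ⟨?_, key1, ?_, key2⟩
  · refine Finite.injective_iff_bijective.mp fun x y h => ?_
    rw [← key1 x, ← key1 y, h]
  · refine Finite.injective_iff_bijective.mp fun x y h => ?_
    rw [← key2 x, ← key2 y, h]
end

section
/- Let q be a prime power, k an odd positive integer, n = 2k, and b ∈ F_{q^n} nonzero with b^{(q^n-1)/(q+1)} ≠ -1. Define L(x) = (b x)^{q^{n-1}} + (b x)^{q^{k-1}}. Then the map f : x ↦ L(x^{q+1})·x^{-1} (where x^{-1} denotes x^{q^n-2}, so 0 maps to 0) is a bijection of F_{q^n}, and its inverse map is g : x ↦ x^{-1}·(L(x^{-(q+1)})^q)^{-1}; that is, g(f(x)) = x for all x ∈ F_{q^n}. -/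
open Finset

/-- For `n = 2k` with `k` odd and `b ≠ 0` with `b^{(q^n-1)/(q+1)} ≠ -1`,
letting `L(x) = (bx)^{q^{n-1}} + (bx)^{q^{k-1}}`, the map `f : x ↦ L(x^{q+1})·x^{-1}` is
a bijection of `F_{q^n}` with inverse `g : x ↦ x^{-1}·(L(x^{-(q+1)})^q)^{-1}`. -/
theorem stmt_10 (q k : ℕ) (hq : IsPrimePow q) (hk : Odd k) (hk0 : 0 < k)
    (F : Type*) [Field F] [Fintype F] (hF : Fintype.card F = q ^ (2 * k))
    (b : F) (hb0 : b ≠ 0) (hb : b ^ ((q ^ (2 * k) - 1) / (q + 1)) ≠ -1)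
    (L : F → F) (hL : ∀ x, L x = (b * x) ^ q ^ (2 * k - 1) + (b * x) ^ q ^ (k - 1)) :
    (Function.Bijective fun x : F => L (x ^ (q + 1)) * x⁻¹) ∧
      ∀ x : F,
        (L (x ^ (q + 1)) * x⁻¹)⁻¹ *
          ((L (((L (x ^ (q + 1)) * x⁻¹)⁻¹) ^ (q + 1))) ^ q)⁻¹ = x := by
  have hq2 : 2 ≤ q := hq.two_le
  have hq0 : 0 < q := by omega
  -- characteristic
  obtain ⟨p, m, hpp, hm, hpm⟩ := hq
  have hpp' : p.Prime := Nat.prime_iff.mpr hpp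
  haveI : Fact p.Prime := ⟨hpp'⟩
  have hcharP : CharP F p := by
    have h1 : CharP F (ringChar F) := ringChar.charP F
    have h2 : (ringChar F).Prime := CharP.char_is_prime F (ringChar F)
    obtain ⟨n, -, hn⟩ := FiniteField.card F (ringChar F)
    have hd : ringChar F ∣ p := by
      have hdp : ringChar F ∣ p ^ (m * (2 * k)) := by
        have he : ringChar F ^ (n : ℕ) = p ^ (m * (2 * k)) := by
          rw [← hn, hF, ← hpm, ← pow_mul]
        exact he ▸ dvd_pow_self (ringChar F) n.ne_zero
      exact h2.prime.dvd_of_dvd_pow hdp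
    have : ringChar F = p := (Nat.prime_dvd_prime_iff_eq h2 hpp').mp hd
    exact this ▸ h1
  -- Frobenius additivity
  have frob : ∀ a c : F, (a + c) ^ q = a ^ q + c ^ q := fun a c => by
    rw [← hpm]; exact add_pow_char_pow a c p m
  have frobk : ∀ a c : F, (a + c) ^ q ^ k = a ^ q ^ k + c ^ q ^ k := fun a c => by
    rw [← hpm, ← pow_mul]; exact add_pow_char_pow a c p (m * k)
  -- pow card
  have hcard : ∀ z : F, z ^ q ^ (2 * k) = z := fun z => by
    rw [← hF]; exact FiniteField.pow_card z
  -- injectivity of q-th power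
  have qinj : ∀ a c : F, a ^ q = c ^ q → a = c := by
    intro a c h
    have key : ∀ z : F, (z ^ q) ^ q ^ (2 * k - 1) = z := by
      intro z
      rw [← pow_mul, ← pow_succ']
      have h12 : 2 * k - 1 + 1 = 2 * k := by omega
      rw [h12]
      exact hcard z
    rw [← key a, h, key c]
  -- L under Frobenius
  have hL' : ∀ z : F, (L z) ^ q = b * z + (b * z) ^ q ^ k := by
    intro z
    rw [hL, frob, ← pow_mul, ← pow_mul, ← pow_succ, ← pow_succ]
    have h1 : 2 * k - 1 + 1 = 2 * k := by omega
    have h2 : k - 1 + 1 = k := by omega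
    rw [h1, h2, hcard]
  -- arithmetic: E = (q^k+1)/(q+1)
  have hgs := geom_sum_mul (-(q : ℤ)) k
  rw [Odd.neg_pow hk] at hgs
  have hdvd : (q + 1) ∣ q ^ k + 1 := by
    have hz : ((q : ℤ) + 1) ∣ ((q : ℤ) ^ k + 1) :=
      ⟨∑ i ∈ range k, (-(q : ℤ)) ^ i, by linear_combination hgs⟩
    have hz' : ((q + 1 : ℕ) : ℤ) ∣ ((q ^ k + 1 : ℕ) : ℤ) := by push_cast; exact hz
    exact_mod_cast hz'
  set E : ℕ := (q ^ k + 1) / (q + 1) with hEdef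
  have hE : (q + 1) * E = q ^ k + 1 := Nat.mul_div_cancel' hdvd
  have hEodd : Odd E := by
    have h2 : ((q : ℤ) + 1) * (E : ℤ) = (q : ℤ) ^ k + 1 := by exact_mod_cast hE
    have h1 : (E : ℤ) * ((q : ℤ) + 1) =
        (∑ i ∈ range k, (-(q : ℤ)) ^ i) * ((q : ℤ) + 1) := by
      linear_combination h2 + hgs
    have hq1 : ((q : ℤ) + 1) ≠ 0 := by positivity
    have h3 : (E : ℤ) = ∑ i ∈ range k, (-(q : ℤ)) ^ i := mul_right_cancel₀ hq1 h1
    have h4 : ((E : ZMod 2)) = ∑ i ∈ range k, (-(q : ZMod 2)) ^ i := by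
      calc ((E : ZMod 2)) = (((E : ℤ)) : ZMod 2) := by push_cast; ring
      _ = ((∑ i ∈ range k, (-(q : ℤ)) ^ i : ℤ) : ZMod 2) := by rw [h3]
      _ = ∑ i ∈ range k, (-(q : ZMod 2)) ^ i := by push_cast; ring
    have h5 : (E : ZMod 2) ≠ 0 := by
      rw [h4]
      rcases Nat.even_or_odd q with hqe | hqo
      · have h0 : ((q : ZMod 2)) = 0 :=
          (ZMod.natCast_eq_zero_iff q 2).mpr hqe.two_dvd
        rw [h0, neg_zero,
          Finset.sum_eq_single 0 (fun i _ hi => zero_pow hi)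
            (fun h => absurd (Finset.mem_range.mpr hk0) h)]
        simp
      · have h1 : ((q : ZMod 2)) = 1 := by
          rw [← ZMod.natCast_mod, Nat.odd_iff.mp hqo, Nat.cast_one]
        rw [h1, show (-1 : ZMod 2) = 1 by decide]
        simp only [one_pow, Finset.sum_const, card_range, nsmul_eq_mul, mul_one]
        rw [Ne, ZMod.natCast_eq_zero_iff]
        exact fun h => (Nat.not_even_iff_odd.mpr hk) (even_iff_two_dvd.mpr h)
    rw [← Nat.not_even_iff_odd]
    exact fun he => h5 ((ZMod.natCast_eq_zero_iff E 2).mpr he.two_dvd)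
  -- exponent identities
  have hQk1 : 1 ≤ q ^ k := Nat.one_le_pow _ _ hq0
  have hmm : (q ^ k - 1) * (q ^ k + 1) = q ^ (2 * k) - 1 := by
    obtain ⟨r, hr⟩ : ∃ r, q ^ k = r + 1 := ⟨q ^ k - 1, by omega⟩
    have h2k : q ^ (2 * k) = (r + 1) * (r + 1) := by
      rw [two_mul, pow_add, hr]
    rw [hr, h2k]
    have : (r + 1) * (r + 1) = r * (r + 1 + 1) + 1 := by ring
    rw [this]
    simp
  have hexp : (q + 1) * ((q ^ k - 1) * E) = q ^ (2 * k) - 1 := by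
    rw [← hmm, ← hE]; ring
  have hd : (q ^ (2 * k) - 1) / (q + 1) = (q ^ k - 1) * E :=
    Nat.div_eq_of_eq_mul_right (by omega) hexp.symm
  rw [hd] at hb
  -- main statement: g ∘ f = id
  have main : ∀ x : F,
      (L (x ^ (q + 1)) * x⁻¹)⁻¹ *
        ((L (((L (x ^ (q + 1)) * x⁻¹)⁻¹) ^ (q + 1))) ^ q)⁻¹ = x := by
    intro x
    rcases eq_or_ne x 0 with rfl | hx
    · simp
    -- notation
    set w : F := b * x ^ (q + 1) with hw
    have hw0 : w ≠ 0 := mul_ne_zero hb0 (pow_ne_zero _ hx)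
    set s : F := w + w ^ q ^ k with hs
    have hcq : (L (x ^ (q + 1))) ^ q = s := hL' _
    have hsQ : s ^ q ^ k = s := by
      rw [hs, frobk, ← pow_mul, ← pow_add, show k + k = 2 * k by ring, hcard,
        add_comm]
    -- s ≠ 0 via the hypothesis on b
    have hs0 : s ≠ 0 := by
      intro h0
      have h1 : w ^ q ^ k = -w := by
        have := hs.symm.trans h0
        linear_combination this
      have h2 : w ^ (q ^ k - 1) = -1 := by
        have h3 : w ^ (q ^ k - 1) * w = -1 * w := by
          rw [← pow_succ]
          have : q ^ k - 1 + 1 = q ^ k := by omega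
          rw [this, h1]; ring
        exact mul_right_cancel₀ hw0 h3
      have h4 : w ^ ((q ^ k - 1) * E) = -1 := by
        rw [pow_mul, h2, hEodd.neg_one_pow]
      have h5 : w ^ ((q ^ k - 1) * E) = b ^ ((q ^ k - 1) * E) := by
        rw [hw, mul_pow, ← pow_mul]
        have he : (q + 1) * ((q ^ k - 1) * E) = q ^ (2 * k) - 1 := hexp
        rw [he, ← hF, FiniteField.pow_card_sub_one_eq_one x hx, mul_one]
      exact hb (by rw [← h5, h4])
    have hLx0 : L (x ^ (q + 1)) ≠ 0 := by
      intro h0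
      apply hs0
      rw [← hcq, h0, zero_pow (by omega)]
    set y : F := L (x ^ (q + 1)) * x⁻¹ with hy
    have hy0 : y ≠ 0 := mul_ne_zero hLx0 (inv_ne_zero hx)
    -- t is the relevant expression
    set A : F := b * (y⁻¹) ^ (q + 1) with hA
    set t : F := (L ((y⁻¹) ^ (q + 1))) ^ q with ht
    have htAA : t = A + A ^ q ^ k := hL' _
    -- compute q-th powers
    have hyq : y ^ q = s * (x ^ q)⁻¹ := by
      rw [hy, mul_pow, hcq, inv_pow]
    have hyinvq : (y⁻¹) ^ q = s⁻¹ * x ^ q := by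
      rw [inv_pow, hyq, mul_inv, inv_inv]
    have hAq : A ^ q = w ^ q * (s⁻¹) ^ (q + 1) := by
      calc A ^ q = b ^ q * ((y⁻¹) ^ q) ^ (q + 1) := by
            rw [hA, mul_pow, pow_right_comm]
      _ = b ^ q * (s⁻¹ ^ (q + 1) * (x ^ q) ^ (q + 1)) := by rw [hyinvq, mul_pow]
      _ = (b * x ^ (q + 1)) ^ q * s⁻¹ ^ (q + 1) := by
            rw [mul_pow, pow_right_comm x (q + 1) q]; ring
      _ = w ^ q * (s⁻¹) ^ (q + 1) := by rw [← hw]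
    have hAqk : (A ^ q ^ k) ^ q = (w ^ q ^ k) ^ q * (s⁻¹) ^ (q + 1) := by
      calc (A ^ q ^ k) ^ q = (A ^ q) ^ q ^ k := pow_right_comm A _ _
      _ = (w ^ q) ^ q ^ k * (s⁻¹ ^ (q + 1)) ^ q ^ k := by rw [hAq, mul_pow]
      _ = (w ^ q ^ k) ^ q * (s⁻¹ ^ q ^ k) ^ (q + 1) := by
            rw [pow_right_comm w, pow_right_comm s⁻¹]
      _ = (w ^ q ^ k) ^ q * (s⁻¹) ^ (q + 1) := by rw [inv_pow, hsQ]
    have htq : t ^ q = s ^ q * (s⁻¹) ^ (q + 1) := by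
      rw [htAA, frob, hAq, hAqk, ← add_mul, ← frob, ← hs]
    -- key identity
    have hxq0 : (x : F) ^ q ≠ 0 := pow_ne_zero _ hx
    have key : t * (x * y) = 1 := by
      apply qinj
      rw [one_pow, mul_pow, mul_pow, htq, hyq]
      have h9 : s ^ q * s⁻¹ ^ (q + 1) * (x ^ q * (s * (x ^ q)⁻¹)) =
          (s ^ q * s) * (s⁻¹ ^ (q + 1)) * (x ^ q * (x ^ q)⁻¹) := by ring
      rw [h9, ← pow_succ, inv_pow, mul_inv_cancel₀ (pow_ne_zero _ hs0),
        mul_inv_cancel₀ hxq0, one_mul]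
    have ht0 : t ≠ 0 := fun h => by simp [h] at key
    have hxy : x * y = t⁻¹ := eq_inv_of_mul_eq_one_right key
    calc y⁻¹ * t⁻¹ = y⁻¹ * (x * y) := by rw [hxy]
    _ = x := by
        rw [mul_comm x y, ← mul_assoc, inv_mul_cancel₀ hy0, one_mul]
  -- bijectivity
  refine ⟨?_, main⟩
  have hinj : Function.Injective fun x : F => L (x ^ (q + 1)) * x⁻¹ := by
    intro a c h
    have := main a
    rw [show L (a ^ (q + 1)) * a⁻¹ = L (c ^ (q + 1)) * c⁻¹ from h] at this
    rw [← this, main c]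
  exact Finite.injective_iff_bijective.mp hinj
end

section
/- Let q be an odd prime power, k an even positive integer, n = 2k, and b ∈ F_{q^n} a nonzero square (i.e., b = c^2 for some c ∈ F_{q^n}). Define L(x) = (b x)^{q^{n-1}} + (b x)^{q^{k-1}}. Then the map f : x ↦ L(x^{q+1})·x^{-1} (where x^{-1} denotes x^{q^n-2}, so 0 maps to 0) is a bijection of F_{q^n}, and its inverse map is g : x ↦ x^{-1}·(L(x^{-(q+1)})^q)^{-1}; that is, g(f(x)) = x for all x ∈ F_{q^n}. -/
/-- For odd `q`, `n = 2k` with `k` even, and `b` a nonzero square,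
letting `L(x) = (bx)^{q^{n-1}} + (bx)^{q^{k-1}}`, the map `f : x ↦ L(x^{q+1})·x^{-1}` is
a bijection of `F_{q^n}` with inverse `g : x ↦ x^{-1}·(L(x^{-(q+1)})^q)^{-1}`. -/
theorem stmt_11 (q k : ℕ) (hq : IsPrimePow q) (hqodd : Odd q) (hk : Even k) (hk0 : 0 < k)
    (F : Type*) [Field F] [Fintype F] (hF : Fintype.card F = q ^ (2 * k))
    (b : F) (hb0 : b ≠ 0) (hb : ∃ c : F, b = c ^ 2)
    (L : F → F) (hL : ∀ x, L x = (b * x) ^ q ^ (2 * k - 1) + (b * x) ^ q ^ (k - 1)) :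
    (Function.Bijective fun x : F => L (x ^ (q + 1)) * x⁻¹) ∧
      ∀ x : F,
        (L (x ^ (q + 1)) * x⁻¹)⁻¹ *
          ((L (((L (x ^ (q + 1)) * x⁻¹)⁻¹) ^ (q + 1))) ^ q)⁻¹ = x := by
  obtain ⟨p, e, hp, he, hpe⟩ := hq
  have hpprime : p.Prime := hp.nat_prime
  haveI hpp : Fact p.Prime := ⟨hpprime⟩
  have hq0 : 0 < q := by rw [← hpe]; exact pow_pos hpprime.pos e
  have hpodd : Odd p := by
    rcases hpprime.eq_two_or_odd' with h2 | hodd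
    · exfalso
      have : Even q := by
        rw [← hpe, h2]
        exact Nat.even_pow.mpr ⟨even_two, by omega⟩
      exact (Nat.not_even_iff_odd.mpr hqodd) this
    · exact hodd
  have hp2 : 2 < p := by
    have h2 := hpprime.two_le
    rcases Nat.lt_or_ge 2 p with h | h
    · exact h
    · exfalso
      have : p = 2 := by omega
      rw [this] at hpodd
      exact absurd hpodd (by decide)
  -- characteristic
  have hcardp : Fintype.card F = p ^ (e * (2 * k)) := by rw [hF, ← hpe, ← pow_mul]
  haveI hchar : CharP F p := by
    have h1 : (ringChar F).Prime := CharP.char_is_prime F (ringChar F)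
    have h2 : ringChar F ∣ p ^ (e * (2 * k)) := by
      apply ringChar.dvd
      rw [← hcardp]
      exact_mod_cast FiniteField.cast_card_eq_zero F
    have h3 : ringChar F = p :=
      (Nat.prime_dvd_prime_iff_eq h1 hpprime).mp (h1.dvd_of_dvd_pow h2)
    exact h3 ▸ ringChar.charP F
  haveI : Fact (2 < p) := ⟨hp2⟩
  have hneg1 : (-1 : F) ≠ 1 := CharP.neg_one_ne_one F p
  -- additivity of q-power Frobenius
  have hadd : ∀ (m : ℕ) (x y : F), (x + y) ^ q ^ m = x ^ q ^ m + y ^ q ^ m := by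
    intro m x y
    have h : q ^ m = p ^ (e * m) := by rw [← hpe, ← pow_mul]
    rw [h]
    exact add_pow_char_pow ..
  have hadd1 : ∀ x y : F, (x + y) ^ q = x ^ q + y ^ q := by
    intro x y
    have := hadd 1 x y
    simpa using this
  -- x^(q^(2k)) = x
  have hfrob : ∀ x : F, x ^ q ^ (2 * k) = x := by
    intro x
    rw [← hF]
    exact FiniteField.pow_card x
  -- Lemma A : L z ^ q = b z + (b z)^(q^k)
  have hA : ∀ z : F, (L z) ^ q = b * z + (b * z) ^ q ^ k := by
    intro z
    rw [hL, hadd1]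
    congr 1
    · rw [← pow_mul, ← pow_succ, Nat.sub_add_cancel (by omega : 1 ≤ 2 * k), hfrob]
    · rw [← pow_mul, ← pow_succ, Nat.sub_add_cancel hk0]
  -- Lemma B : L z ^ (q^k) = L z
  have hB : ∀ z : F, (L z) ^ q ^ k = L z := by
    intro z
    rw [hL, hadd k]
    have e1 : (2 * k - 1) + k = 2 * k + (k - 1) := by omega
    have e2 : (k - 1) + k = 2 * k - 1 := by omega
    rw [← pow_mul, ← pow_mul, ← pow_add, ← pow_add, e1, e2, pow_add, pow_mul, hfrob,
      add_comm]
  -- Nonvanishing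
  have hC : ∀ x : F, x ≠ 0 → L (x ^ (q + 1)) ≠ 0 := by
    intro x hx ht
    set z : F := b * x ^ (q + 1) with hz
    have hz0 : z ≠ 0 := mul_ne_zero hb0 (pow_ne_zero _ hx)
    have hzq : z ^ q ^ k = -z := by
      have h := hA (x ^ (q + 1))
      rw [ht, zero_pow (by omega : q ≠ 0), ← hz] at h
      linear_combination -h
    have hqk1 : 1 ≤ q ^ k := Nat.one_le_pow _ _ hq0
    have hzm1 : z ^ (q ^ k - 1) = -1 := by
      have h1 : z ^ (q ^ k - 1) * z = -1 * z := by
        rw [← pow_succ, Nat.sub_add_cancel hqk1, hzq]; ring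
      exact mul_right_cancel₀ hz0 h1
    -- k even : q^k = (2s+1)^2
    obtain ⟨m, hm⟩ := hk
    obtain ⟨s, hs⟩ := hqodd.pow (n := m)
    have hqk : q ^ k = (2 * s + 1) ^ 2 := by
      rw [hm, pow_add, hs]; ring
    set M : ℕ := 2 * s ^ 2 + 2 * s + 1 with hM
    have hModd : Odd M := ⟨s ^ 2 + s, by omega⟩
    have hq2k : q ^ (2 * k) = (q ^ k) ^ 2 := by rw [← pow_mul, mul_comm]
    have hval : q ^ (2 * k) = 2 * ((q ^ k - 1) * M) + 1 := by
      have h1 : q ^ k - 1 = 4 * s ^ 2 + 4 * s := by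
        have h2 : (2 * s + 1) ^ 2 = 4 * s ^ 2 + 4 * s + 1 := by ring
        omega
      rw [hq2k, h1, hM, hqk]
      ring
    -- z is a nonzero square
    obtain ⟨c, hc⟩ := hb
    have hc0 : c ≠ 0 := fun h => hb0 (by rw [hc, h]; ring)
    obtain ⟨j, hj⟩ := hqodd
    set w : F := c * x ^ (j + 1) with hw
    have hw0 : w ≠ 0 := mul_ne_zero hc0 (pow_ne_zero _ hx)
    have hzw : z = w ^ 2 := by
      rw [hz, hc, hw, mul_pow, ← pow_mul]
      have : (j + 1) * 2 = q + 1 := by omega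
      rw [this]
    have h1 : z ^ ((q ^ k - 1) * M) = -1 := by
      rw [pow_mul, hzm1, hModd.neg_one_pow]
    have h2 : z ^ ((q ^ k - 1) * M) = 1 := by
      rw [hzw, ← pow_mul]
      have hN : 2 * ((q ^ k - 1) * M) = q ^ (2 * k) - 1 := by omega
      rw [hN]
      have h3 : w ^ (q ^ (2 * k) - 1) * w = 1 * w := by
        rw [← pow_succ, Nat.sub_add_cancel (Nat.one_le_pow _ _ hq0), hfrob, one_mul]
      exact mul_right_cancel₀ hw0 h3
    rw [h1] at h2
    exact hneg1 h2
  -- main computation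
  have key : ∀ x : F,
      (L (x ^ (q + 1)) * x⁻¹)⁻¹ *
        ((L (((L (x ^ (q + 1)) * x⁻¹)⁻¹) ^ (q + 1))) ^ q)⁻¹ = x := by
    intro x
    by_cases hx : x = 0
    · subst hx
      have hL0 : L (0 : F) = 0 := by
        rw [hL, mul_zero, zero_pow (by positivity), zero_pow (by positivity), add_zero]
    
      rw [zero_pow (by omega : q + 1 ≠ 0), hL0, zero_mul, inv_zero, zero_mul]
    · set t : F := L (x ^ (q + 1)) with htdef
      have ht : t ≠ 0 := hC x hx
      have hyinv : (t * x⁻¹)⁻¹ = t⁻¹ * x := by rw [mul_inv, inv_inv]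
      rw [hyinv]
      have htk : t ^ q ^ k = t := hB (x ^ (q + 1))
      have hS : (L ((t⁻¹ * x) ^ (q + 1))) ^ q = t⁻¹ := by
        rw [hA]
        have harg : b * (t⁻¹ * x) ^ (q + 1) = (t⁻¹) ^ (q + 1) * (b * x ^ (q + 1)) := by
          rw [mul_pow]; ring
        rw [harg, mul_pow, ← pow_right_comm, inv_pow t (q ^ k), htk, ← mul_add,
          ← hA, ← htdef]
        have hcancel : (t⁻¹) ^ q * t ^ q = 1 := by
          rw [← mul_pow, inv_mul_cancel₀ ht, one_pow]
        rw [pow_succ]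
        linear_combination t⁻¹ * hcancel
      rw [hS, inv_inv]
      field_simp
  refine ⟨?_, key⟩
  have hinj : Function.Injective (fun x : F => L (x ^ (q + 1)) * x⁻¹) :=
    Function.LeftInverse.injective
      (g := fun y : F => y⁻¹ * (L (y⁻¹ ^ (q + 1)) ^ q)⁻¹) key
  exact Finite.injective_iff_bijective.mp hinj
end

section
/- Let q be an odd prime power and let a, b ∈ F_{q^4} be nonzero squares (i.e., each is c^2 for some c ∈ F_{q^4}) such that a·b^{-q} ∈ F_{q^2} and N(a) ≠ N(b), where N(x) = ∏_{i=0}^{3} x^{q^i} is the norm from F_{q^4} to F_q. Define L(x) = (a x^q)^{q^2} + (b x)^{q^2} + a x^q + b x. Then the map f : x ↦ L(x^{q+1})·x^{-1} (where x^{-1} denotes x^{q^4-2}, so 0 maps to 0) is a bijection of F_{q^4}, and its inverse map is g : x ↦ x^{-1}·(L(x^{-(q+1)})^q)^{-1}; that is, g(f(x)) = x for all x ∈ F_{q^4}. -/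
/-- For odd `q` and nonzero squares `a, b ∈ F_{q^4}` with `a·b^{-q} ∈ F_{q^2}`
and `N(a) ≠ N(b)`, letting `L(x) = (ax^q)^{q^2} + (bx)^{q^2} + ax^q + bx`, the map
`f : x ↦ L(x^{q+1})·x^{-1}` is a bijection of `F_{q^4}` with inverse
`g : x ↦ x^{-1}·(L(x^{-(q+1)})^q)^{-1}`. -/
theorem stmt_12 (q : ℕ) (hq : IsPrimePow q) (hqodd : Odd q)
    (F : Type*) [Field F] [Fintype F] (hF : Fintype.card F = q ^ 4)
    (a b : F) (ha0 : a ≠ 0) (hb0 : b ≠ 0)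
    (ha : ∃ c : F, a = c ^ 2) (hb : ∃ c : F, b = c ^ 2)
    (hab : (a * (b⁻¹) ^ q) ^ q ^ 2 = a * (b⁻¹) ^ q)
    (hN : ∏ i ∈ Finset.range 4, a ^ q ^ i ≠ ∏ i ∈ Finset.range 4, b ^ q ^ i)
    (L : F → F)
    (hL : ∀ x, L x = (a * x ^ q) ^ q ^ 2 + (b * x) ^ q ^ 2 + a * x ^ q + b * x) :
    (Function.Bijective fun x : F => L (x ^ (q + 1)) * x⁻¹) ∧
      ∀ x : F,
        (L (x ^ (q + 1)) * x⁻¹)⁻¹ *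
          ((L (((L (x ^ (q + 1)) * x⁻¹)⁻¹) ^ (q + 1))) ^ q)⁻¹ = x := by
  classical
  obtain ⟨p, k, hpp, hk, hpk⟩ := hq
  have hp' : p.Prime := hpp.nat_prime
  haveI := Fact.mk hp'
  obtain ⟨m, hm⟩ := hqodd
  have hq0 : q ≠ 0 := by omega
  -- characteristic
  have hcard : Fintype.card F = p ^ (4 * k) := by
    rw [hF, ← hpk, ← pow_mul, mul_comm]
  haveI hCF : CharP F p := by
    haveI := ringChar.charP F
    have h1 : ((p : F)) ^ (4 * k) = 0 := by
      have h0 : ((Fintype.card F : ℕ) : F) = 0 := FiniteField.cast_card_eq_zero F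
      rw [hcard] at h0; push_cast at h0; exact h0
    have h2 : (p : F) = 0 := pow_eq_zero_iff (by omega) |>.mp h1
    have h3 : ringChar F ∣ p := (CharP.cast_eq_zero_iff F (ringChar F) p).mp h2
    have h4 : ringChar F = p := by
      rcases (Nat.Prime.eq_one_or_self_of_dvd hp' _ h3) with h | h
      · exfalso
        have h5 : ((1 : ℕ) : F) = 0 := by
          rw [CharP.cast_eq_zero_iff F (ringChar F) 1, h]
        rw [Nat.cast_one] at h5
        exact one_ne_zero h5
      · exact h
    exact h4 ▸ ringChar.charP F
  have hp2 : p ≠ 2 := by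
    intro h
    have hdvd : p ∣ q := hpk ▸ dvd_pow_self p hk.ne'
    rw [h] at hdvd
    omega
  have h2F : (2 : F) ≠ 0 := by
    intro h
    have h2 : ((2 : ℕ) : F) = 0 := by exact_mod_cast h
    have := (CharP.cast_eq_zero_iff F p 2).mp h2
    exact hp2 ((Nat.prime_dvd_prime_iff_eq hp' Nat.prime_two).mp this)
  -- the Frobenius-power ring hom
  have hadd : ∀ x y : F, (x + y) ^ q = x ^ q + y ^ q := by
    intro x y; rw [← hpk]; exact add_pow_char_pow (R := F) (p := p) (n := k) (x := x) (y := y)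
  set φ : F →+* F :=
    { toFun := (· ^ q), map_one' := one_pow q, map_mul' := fun x y => mul_pow x y q,
      map_zero' := zero_pow hq0, map_add' := hadd } with hφdef
  have hφ : ∀ x : F, φ x = x ^ q := fun _ => rfl
  have hc4 : ∀ y : F, y ^ (q * q * q * q) = y := by
    intro y
    rw [show q * q * q * q = q ^ 4 by ring, ← hF]
    exact FiniteField.pow_card y
  have φ4 : ∀ y : F, φ (φ (φ (φ y))) = y := by
    intro y
    rw [hφ, hφ, hφ, hφ, ← pow_mul, ← pow_mul, ← pow_mul,
      show q * (q * (q * q)) = q ^ 4 from by ring, ← hF]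
    exact FiniteField.pow_card y
  have hφ0 : ∀ y : F, y ≠ 0 → φ y ≠ 0 := by
    intro y hy h
    rw [hφ] at h
    exact hy (pow_eq_zero_iff hq0 |>.mp h)
  have e2 : ∀ w : F, w ^ q ^ 2 = φ (φ w) := by
    intro w; rw [hφ, hφ, ← pow_mul]
    congr 1
    ring
  have e3 : ∀ w : F, w ^ q ^ 3 = φ (φ (φ w)) := by
    intro w; rw [hφ, hφ, hφ, ← pow_mul, ← pow_mul]
    congr 1
    ring
  have hprod4 : ∀ y : F, ∏ i ∈ Finset.range 4, y ^ q ^ i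
      = y * φ y * φ (φ y) * φ (φ (φ y)) := by
    intro y
    rw [Finset.prod_range_succ, Finset.prod_range_succ, Finset.prod_range_succ,
      Finset.prod_range_one, e2, e3, pow_zero, pow_one, pow_one, ← hφ]
  -- L in φ form
  have hLφ : ∀ z : F, L z = φ (φ (a * φ z + b * z)) + (a * φ z + b * z) := by
    intro z
    rw [hL z, e2, e2, ← hφ]
    simp only [map_add]
    ring
  -- t ∈ F_{q²}
  set t := a * (b⁻¹) ^ q with htdef
  have ht2 : φ (φ t) = t := by rw [← e2]; exact hab
  have hbq0 : (b : F) ^ q ≠ 0 := pow_ne_zero q hb0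
  have hta : a = t * φ b := by
    rw [htdef, hφ, inv_pow, mul_assoc, inv_mul_cancel₀ hbq0, mul_one]
  have hNt : (t * φ t) ^ 2 ≠ 1 := by
    intro h1
    apply hN
    rw [hprod4, hprod4]
    have expand : a * φ a * φ (φ a) * φ (φ (φ a))
        = (t * φ t) ^ 2 * (b * φ b * φ (φ b) * φ (φ (φ b))) := by
      rw [hta]
      simp only [map_mul]
      rw [ht2, φ4 b]
      ring
    rw [expand, h1, one_mul]
  -- key nonvanishing
  have key_ne : ∀ x : F, x ≠ 0 → L (x ^ (q + 1)) ≠ 0 := by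
    intro x hx hs
    have hφx : φ x ≠ 0 := hφ0 x hx
    set u := a * φ (φ x) + b * x with hu
    have hxq : x ^ (q + 1) = φ x * x := by rw [pow_succ, ← hφ]
    have hsu : L (x ^ (q + 1)) = φ (φ (φ x)) * φ (φ u) + φ x * u := by
      rw [hLφ, hxq]
      have h1 : a * φ (φ x * x) + b * (φ x * x) = φ x * u := by
        rw [map_mul, hu]; ring
      rw [h1, map_mul, map_mul]
    rw [hsu] at hs
    have hu0 : u ≠ 0 := by
      intro h0
      have e0 : a * φ (φ x) = -(b * x) := by
        rw [hu] at h0; linear_combination h0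
      have e1 : φ a * φ (φ (φ x)) = -(φ b * φ x) := by
        have h := congrArg φ e0
        rwa [map_mul, map_neg, map_mul] at h
      have e2' : φ (φ a) * x = -(φ (φ b) * φ (φ x)) := by
        have h := congrArg φ e1
        rwa [map_mul, map_neg, map_mul, φ4] at h
      have e3' : φ (φ (φ a)) * φ x = -(φ (φ (φ b)) * φ (φ (φ x))) := by
        have h := congrArg φ e2'
        rwa [map_mul, map_neg, map_mul] at h
      have hXne : x * φ x * φ (φ x) * φ (φ (φ x)) ≠ 0 :=
        mul_ne_zero (mul_ne_zero (mul_ne_zero hx hφx) (hφ0 _ hφx)) (hφ0 _ (hφ0 _ hφx))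
      have h2 : (a * φ a * φ (φ a) * φ (φ (φ a))) * (x * φ x * φ (φ x) * φ (φ (φ x)))
          = (b * φ b * φ (φ b) * φ (φ (φ b))) * (x * φ x * φ (φ x) * φ (φ (φ x))) := by
        calc (a * φ a * φ (φ a) * φ (φ (φ a))) * (x * φ x * φ (φ x) * φ (φ (φ x)))
            = (a * φ (φ x)) * (φ a * φ (φ (φ x))) * (φ (φ a) * x) * (φ (φ (φ a)) * φ x) := by
              ring
          _ = (-(b * x)) * (-(φ b * φ x)) * (-(φ (φ b) * φ (φ x)))
              * (-(φ (φ (φ b)) * φ (φ (φ x)))) := by rw [e0, e1, e2', e3']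
          _ = (b * φ b * φ (φ b) * φ (φ (φ b))) * (x * φ x * φ (φ x) * φ (φ (φ x))) := by
              ring
      exact hN (by rw [hprod4, hprod4]; exact mul_right_cancel₀ hXne h2)
    -- u ≠ 0 case
    set z := b * (φ x * x) with hzdef
    have hz0 : z ≠ 0 := mul_ne_zero hb0 (mul_ne_zero hφx hx)
    have hv : φ x * u = t * φ z + z := by
      rw [hu, hta, hzdef]
      simp only [map_mul]
      ring
    have hvneg : φ (φ (t * φ z + z)) = -(t * φ z + z) := by
      rw [← hv]
      simp only [map_mul]
      linear_combination hs
    have hvneg' : t * φ (φ (φ z)) + φ (φ z) = -(t * φ z + z) := by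
      have h := hvneg
      simp only [map_add, map_mul] at h
      rwa [ht2] at h
    set A := z + φ (φ z) with hAdef
    have hA2 : φ (φ A) = A := by
      rw [hAdef]
      simp only [map_add]
      rw [φ4 z]
      ring
    by_cases hA0 : A = 0
    · -- z^{q²} = -z, but z is a nonzero square: contradiction
      have hzneg : φ (φ z) = -z := by
        rw [hAdef] at hA0; linear_combination hA0
      obtain ⟨c, hcq⟩ := hb
      have hzsq : z = (c * x ^ (m + 1)) ^ 2 := by
        rw [hzdef, hcq, hφ, hm]
        ring
      set d := c * x ^ (m + 1) with hd
      have hd0 : d ≠ 0 := by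
        intro h
        apply hz0
        rw [hzsq, h]
        ring
      have hdd : (φ (φ d)) ^ 2 = -(d ^ 2) := by
        rw [← map_pow, ← map_pow, ← hzsq, hzneg, hzsq]
      have hdq : φ (φ d) = d ^ (q * q) := by rw [hφ, hφ, ← pow_mul]
      rw [hdq] at hdd
      have eL : ((d ^ (q * q)) ^ 2) ^ (2 * (m * m + m) + 1) = d * d ^ (q * q) := by
        rw [← pow_mul, ← pow_mul,
          show q * q * (2 * (2 * (m * m + m) + 1)) = q * q * q * q + q * q by subst hm; ring,
          pow_add, hc4]
      have eR : (-(d ^ 2)) ^ (2 * (m * m + m) + 1) = -(d ^ (q * q) * d) := by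
        rw [Odd.neg_pow ⟨m * m + m, rfl⟩, ← pow_mul,
          show 2 * (2 * (m * m + m) + 1) = q * q + 1 by subst hm; ring,
          pow_succ]
      have e1' : d * d ^ (q * q) = -(d ^ (q * q) * d) := by
        rw [← eL, ← eR, hdd]
      have h2z : (2 : F) * (d * d ^ (q * q)) = 0 := by linear_combination e1'
      have hdd0 : d * d ^ (q * q) ≠ 0 := mul_ne_zero hd0 (pow_ne_zero _ hd0)
      rcases mul_eq_zero.mp h2z with h | h
      · exact h2F h
      · exact hdd0 h
    · -- A ≠ 0 forces t^{q+1} = 1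
      have hφA : φ A = φ z + φ (φ (φ z)) := by rw [hAdef, map_add]
      have hAeq : t * φ A + A = 0 := by
        rw [hφA, hAdef]
        linear_combination hvneg'
      have hAeq2 : φ t * A + φ A = 0 := by
        have h := congrArg φ hAeq
        simp only [map_add, map_mul, map_zero] at h
        rwa [hA2] at h
      have h1' : t * φ A = -A := by linear_combination hAeq
      have h2'' : φ t * A = -(φ A) := by linear_combination hAeq2
      have hmul : (t * φ A) * (φ t * A) = (-A) * (-(φ A)) := by rw [h1', h2'']
      have hAφA : A * φ A ≠ 0 := mul_ne_zero hA0 (hφ0 A hA0)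
      have htt : t * φ t = 1 := by
        have h : (t * φ t) * (A * φ A) = 1 * (A * φ A) := by linear_combination hmul
        exact mul_right_cancel₀ hAφA h
      exact hNt (by rw [htt, one_pow])
  -- main identity
  have main : ∀ x : F,
      (L (x ^ (q + 1)) * x⁻¹)⁻¹ *
        ((L (((L (x ^ (q + 1)) * x⁻¹)⁻¹) ^ (q + 1))) ^ q)⁻¹ = x := by
    intro x
    by_cases hx : x = 0
    · subst hx; simp
    · set s := L (x ^ (q + 1)) with hsdef
      have hs0 : s ≠ 0 := key_ne x hx
      have hsF : φ (φ s) = s := by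
        rw [hsdef, hLφ]
        simp only [map_add, φ4]
        ring
      set c := s * φ s with hcdef
      have hc0 : c ≠ 0 := mul_ne_zero hs0 (hφ0 _ hs0)
      have hφc : φ c = c := by rw [hcdef, map_mul, hsF]; ring
      have hφcinv : φ (c⁻¹) = c⁻¹ := by rw [hφ, inv_pow, ← hφ, hφc]
      have hfx : (s * x⁻¹)⁻¹ = x * s⁻¹ := by
        rw [mul_inv, inv_inv, mul_comm]
      have hsc' : s ^ (q + 1) = c := by
        rw [hcdef, hφ, pow_succ, mul_comm]
      have hpow : (x * s⁻¹) ^ (q + 1) = x ^ (q + 1) * c⁻¹ := by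
        rw [mul_pow, inv_pow, hsc']
      have hW : s = φ (φ (a * φ (x ^ (q + 1)) + b * x ^ (q + 1)))
          + (a * φ (x ^ (q + 1)) + b * x ^ (q + 1)) := by
        rw [hsdef, hLφ]
      have hLc : L (x ^ (q + 1) * c⁻¹) = s * c⁻¹ := by
        rw [hLφ]
        have hinner : a * φ (x ^ (q + 1) * c⁻¹) + b * (x ^ (q + 1) * c⁻¹)
            = (a * φ (x ^ (q + 1)) + b * x ^ (q + 1)) * c⁻¹ := by
          rw [map_mul, hφcinv]; ring
        rw [hinner]
        simp only [map_mul, hφcinv]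
        rw [hW]
        ring
      have hq' : ((φ s)⁻¹) ^ q = s⁻¹ := by
        rw [inv_pow, ← hφ, hsF]
      have hsc : s * c⁻¹ = (φ s)⁻¹ := by
        rw [hcdef, mul_inv, ← mul_assoc, mul_inv_cancel₀ hs0, one_mul]
      rw [hfx, hpow, hLc, hsc, hq', inv_inv, mul_assoc, inv_mul_cancel₀ hs0, mul_one]
  refine ⟨?_, main⟩
  have hinj : Function.Injective (fun x : F => L (x ^ (q + 1)) * x⁻¹) := by
    intro x y hxy
    have hxy' : L (x ^ (q + 1)) * x⁻¹ = L (y ^ (q + 1)) * y⁻¹ := hxy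
    have hx := main x
    rw [hxy'] at hx
    exact hx.symm.trans (main y)
  exact Finite.injective_iff_bijective.mp hinj
end

section
/- Let q be an odd prime power and a ∈ F_{q^3} nonzero with N(a) ≠ -1, where N(x) = x^{q^2+q+1} is the norm from F_{q^3} to F_q. Then the map f : x ↦ x^{q^2-q+1} + 2a·x + a^2·x^{q^3-q^2+q} is a bijection of F_{q^3}, and its inverse map is g(x) = ( -a^{2q+1}·x^{q^2} + a^{q^2+q}·x - a·x^q + 2a^{q+1}·x^{(q^4+q^2)/2} + (1-N(a))·x^{(q^3+q)/2} + (N(a)-1)·a^q·x^{(q^2+1)/2} ) / (N(a)+1)^2; that is, g(f(x)) = x for all x ∈ F_{q^3}. -/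
/-- For odd `q` and `a ≠ 0` with `N(a) ≠ -1`, the map
`f : x ↦ x^{q^2-q+1} + 2a·x + a^2·x^{q^3-q^2+q}` is a bijection of `F_{q^3}` with the stated
inverse `g`. -/
theorem stmt_13 (q : ℕ) (hq : IsPrimePow q) (hqodd : Odd q)
    (F : Type*) [Field F] [Fintype F] (hF : Fintype.card F = q ^ 3)
    (a : F) (ha : a ≠ 0) (hNa : a ^ (q ^ 2 + q + 1) ≠ -1)
    (f g : F → F)
    (hf : ∀ x, f x = x ^ (q ^ 2 - q + 1) + 2 * a * x + a ^ 2 * x ^ (q ^ 3 - q ^ 2 + q))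
    (hg : ∀ x, g x =
      (-(a ^ (2 * q + 1)) * x ^ q ^ 2 + a ^ (q ^ 2 + q) * x - a * x ^ q
        + 2 * a ^ (q + 1) * x ^ ((q ^ 4 + q ^ 2) / 2)
        + (1 - a ^ (q ^ 2 + q + 1)) * x ^ ((q ^ 3 + q) / 2)
        + (a ^ (q ^ 2 + q + 1) - 1) * a ^ q * x ^ ((q ^ 2 + 1) / 2))
      / (a ^ (q ^ 2 + q + 1) + 1) ^ 2) :
    Function.Bijective f ∧ ∀ x, g (f x) = x := by
  classical
  -- characteristic facts
  obtain ⟨p, kk, hp, hkk, hpk⟩ := hq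
  have hp' : Nat.Prime p := Nat.prime_iff.mpr hp
  haveI : Fact (Nat.Prime (ringChar F)) := ⟨CharP.char_is_prime F (ringChar F)⟩
  obtain ⟨n, hrprime, hcardr⟩ := FiniteField.card F (ringChar F)
  have hrp : ringChar F = p := by
    have hF' : ringChar F ^ (n : ℕ) = p ^ (kk * 3) := by
      rw [← hcardr, hF, ← hpk, ← pow_mul]
    have hdvd : ringChar F ∣ p ^ (kk * 3) := hF' ▸ dvd_pow_self (ringChar F) n.ne_zero
    exact (Nat.prime_dvd_prime_iff_eq hrprime hp').mp (hrprime.dvd_of_dvd_pow hdvd)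
  haveI : CharP F p := hrp ▸ ringChar.charP F
  haveI : Fact (Nat.Prime p) := ⟨hp'⟩
  have hfrobq : ∀ s t : F, (s + t) ^ q = s ^ q + t ^ q := by
    intro s t
    rw [← hpk]
    exact add_pow_char_pow s t p kk
  have hcard : ∀ t : F, t ^ q ^ 3 = t := by
    intro t
    rw [← hF]
    exact FiniteField.pow_card t
  obtain ⟨k, hk⟩ := hqodd
  have hk' : q = 2 * k + 1 := by omega
  have hq0 : q ≠ 0 := by omega
  set m : ℕ := 2 * k ^ 2 + 2 * k + 1 with hm
  -- exponent arithmetic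
  have hqle : q ≤ q ^ 2 := Nat.le_self_pow (by norm_num) q
  have hq23 : q ^ 2 ≤ q ^ 3 := Nat.pow_le_pow_right (by omega) (by norm_num)
  have E1 : q ^ 2 - q + 1 + q = q ^ 2 + 1 := by
    rw [add_right_comm, Nat.sub_add_cancel hqle]
  have E2 : q ^ 3 - q ^ 2 + q + q ^ 2 = q ^ 3 + q := by
    rw [add_right_comm, Nat.sub_add_cancel hq23]
  have Em1 : (q ^ 2 + 1) / 2 = m := by
    have h2 : q ^ 2 + 1 = m * 2 := by rw [hm, hk']; ring
    rw [h2, Nat.mul_div_cancel _ (by norm_num)]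
  have Em2 : (q ^ 3 + q) / 2 = m * q := by
    have h2 : q ^ 3 + q = m * q * 2 := by rw [hm, hk']; ring
    rw [h2, Nat.mul_div_cancel _ (by norm_num)]
  have Em3 : (q ^ 4 + q ^ 2) / 2 = m * q ^ 2 := by
    have h2 : q ^ 4 + q ^ 2 = m * q ^ 2 * 2 := by rw [hm, hk']; ring
    rw [h2, Nat.mul_div_cancel _ (by norm_num)]
  have Em4 : (q + q ^ 2) * m = q ^ 3 * (k + 1) + (2 * k ^ 2 + 3 * k + 1) := by
    rw [hm, hk']; ring
  have h2m : 2 * m = q ^ 2 + 1 := by rw [hm, hk']; ring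
  have hexp1 : q ^ 2 - q + 1 ≠ 0 := Nat.succ_ne_zero _
  have hexp2 : q ^ 3 - q ^ 2 + q ≠ 0 := by
    have hle : q ≤ q ^ 3 - q ^ 2 + q := Nat.le_add_left q _
    omega
  have hden : a ^ (q ^ 2 + q + 1) + 1 ≠ 0 := by
    intro h
    exact hNa (by linear_combination h)
  have hden2 : (a ^ (q ^ 2 + q + 1) + 1) ^ 2 ≠ 0 := pow_ne_zero 2 hden
  -- the key pointwise identity
  have hgf : ∀ x, g (f x) = x := by
    intro x
    by_cases hx : x = 0
    · subst hx
      have hf0 : f 0 = 0 := by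
        rw [hf]
        simp [zero_pow hexp1, zero_pow hexp2]
      rw [hf0, hg, Em1, Em2, Em3]
      have hq2ne : q ^ 2 ≠ 0 := pow_ne_zero 2 hq0
      have hmne : m ≠ 0 := Nat.succ_ne_zero _
      simp [zero_pow hq2ne, zero_pow hq0, zero_pow hmne,
        zero_pow (mul_ne_zero hmne hq0), zero_pow (mul_ne_zero hmne hq2ne)]
    · -- Frobenius bookkeeping
      have hxq3 : x ^ q ^ 3 = x := hcard x
      have haq3 : a ^ q ^ 3 = a := hcard a
      have hyq : (x ^ q) ^ q = x ^ q ^ 2 := by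
        rw [← pow_mul]; congr 1; ring
      have hzq : (x ^ q ^ 2) ^ q = x := by
        rw [← pow_mul]
        have : q ^ 2 * q = q ^ 3 := by ring
        rw [this, hxq3]
      have hbq : (a ^ q) ^ q = a ^ q ^ 2 := by
        rw [← pow_mul]; congr 1; ring
      have hcq : (a ^ q ^ 2) ^ q = a := by
        rw [← pow_mul]
        have : q ^ 2 * q = q ^ 3 := by ring
        rw [this, haq3]
      -- step 1 : f x * (y z) = x A²
      have e1 : x ^ (q ^ 2 - q + 1) * x ^ q = x ^ q ^ 2 * x := by
        rw [← pow_add, E1, pow_succ]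
      have e2 : x ^ (q ^ 3 - q ^ 2 + q) * x ^ q ^ 2 = x * x ^ q := by
        rw [← pow_add, E2, pow_add, hxq3]
      have h1 : f x * (x ^ q * x ^ q ^ 2) = x * (x ^ q ^ 2 + a * x ^ q) ^ 2 := by
        rw [hf]
        linear_combination (x ^ q ^ 2) * e1 + (a ^ 2 * x ^ q) * e2
      -- Frobenius of the factors
      have hAq : (x ^ q ^ 2 + a * x ^ q) ^ q = x + a ^ q * x ^ q ^ 2 := by
        rw [hfrobq, mul_pow, hyq, hzq]
      have hBq : (x + a ^ q * x ^ q ^ 2) ^ q = x ^ q + a ^ q ^ 2 * x := by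
        rw [hfrobq, mul_pow, hbq, hzq]
      have hCq : (x ^ q + a ^ q ^ 2 * x) ^ q = x ^ q ^ 2 + a * x ^ q := by
        rw [hfrobq, mul_pow, hcq, hyq]
      -- step 2 : (f x)^q * (z x) = y B²
      have h2 : f x ^ q * (x ^ q ^ 2 * x) = x ^ q * (x + a ^ q * x ^ q ^ 2) ^ 2 := by
        have h := congrArg (· ^ q) h1
        simp only [mul_pow] at h
        rw [hyq, hzq, pow_right_comm _ 2 q, hAq] at h
        linear_combination h
      -- step 3 : (f x)^(q²) * (x y) = z C²
      have h3 : f x ^ q ^ 2 * (x * x ^ q) = x ^ q ^ 2 * (x ^ q + a ^ q ^ 2 * x) ^ 2 := by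
        have h := congrArg (· ^ q) h2
        simp only [mul_pow] at h
        rw [hzq, hyq, pow_right_comm _ 2 q, hBq, ← pow_mul] at h
        have hqq : q * q = q ^ 2 := by ring
        rw [hqq] at h
        linear_combination h
      -- step 4 : (f x)^m * y = C A
      have hyzm : (x ^ q * x ^ q ^ 2) ^ m = x ^ m * x ^ q := by
        rw [← pow_add, ← pow_mul, Em4, pow_add, pow_mul, hxq3, ← pow_add]
        congr 1
        rw [hm, hk']; ring
      have hA2m : ((x ^ q ^ 2 + a * x ^ q) ^ 2) ^ m
          = (x ^ q + a ^ q ^ 2 * x) * (x ^ q ^ 2 + a * x ^ q) := by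
        rw [← pow_mul, h2m, pow_succ]
        congr 1
        have hsplit : (x ^ q ^ 2 + a * x ^ q) ^ q ^ 2
            = ((x ^ q ^ 2 + a * x ^ q) ^ q) ^ q := by
          rw [← pow_mul]; congr 1; ring
        rw [hsplit, hAq, hBq]
      have h4 : f x ^ m * x ^ q
          = (x ^ q + a ^ q ^ 2 * x) * (x ^ q ^ 2 + a * x ^ q) := by
        have h := congrArg (· ^ m) h1
        rw [mul_pow, hyzm, mul_pow, hA2m] at h
        have hxm : x ^ m ≠ 0 := pow_ne_zero _ hx
        refine mul_left_cancel₀ hxm ?_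
        linear_combination h
      -- step 5 : (f x)^(m q) * z = A B
      have h5 : f x ^ (m * q) * x ^ q ^ 2
          = (x ^ q ^ 2 + a * x ^ q) * (x + a ^ q * x ^ q ^ 2) := by
        have h := congrArg (· ^ q) h4
        simp only [mul_pow] at h
        rw [hyq, hCq, hAq, ← pow_mul] at h
        linear_combination h
      -- step 6 : (f x)^(m q²) * x = B C
      have h6 : f x ^ (m * q ^ 2) * x
          = (x + a ^ q * x ^ q ^ 2) * (x ^ q + a ^ q ^ 2 * x) := by
        have h := congrArg (· ^ q) h5
        simp only [mul_pow] at h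
        rw [hzq, hAq, hBq, ← pow_mul] at h
        have hqq : m * q * q = m * q ^ 2 := by ring
        rw [hqq] at h
        linear_combination h
      -- assemble
      rw [hg, Em1, Em2, Em3, div_eq_iff hden2]
      have hxyz : x * x ^ q * x ^ q ^ 2 ≠ 0 :=
        mul_ne_zero (mul_ne_zero hx (pow_ne_zero _ hx)) (pow_ne_zero _ hx)
      refine mul_right_cancel₀ hxyz ?_
      linear_combination (a ^ q ^ 2 * a ^ q * x) * h1 + (-(a * x ^ q)) * h2
        + (-(a * (a ^ q) ^ 2 * x ^ q ^ 2)) * h3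
        + ((a ^ (q ^ 2 + q + 1) - 1) * a ^ q * x * x ^ q ^ 2) * h4
        + ((1 - a ^ (q ^ 2 + q + 1)) * x * x ^ q) * h5
        + (2 * a * a ^ q * x ^ q * x ^ q ^ 2) * h6
  refine ⟨?_, hgf⟩
  have hinj : Function.Injective f := by
    intro x1 x2 h
    rw [← hgf x1, ← hgf x2, h]
  exact Finite.injective_iff_bijective.mp hinj
end

section
/- Let q be an odd prime power and n an odd positive integer, let p be the characteristic of F_{q^n}, and let χ : F_{q^n} → ℂ be the canonical additive character χ(x) = ζ_p^{Tr_{F_{q^n}/F_p}(x)} where ζ_p is a primitive p-th root of unity in ℂ and Tr_{F_{q^n}/F_p} is the absolute trace. Let η be the quadratic character of F_{q^n} (η(x) = 1 if x is a nonzero square, η(x) = -1 if x is a nonsquare, η(0) = 0), let G = ∑_{x ∈ F_{q^n}} η(x)χ(x) be the quadratic Gauss sum, let λ(x) = ∑_{i=0}^{n-1} (-1)^{i+1} x^{q^{2i}}, let N(x) = ∏_{i=0}^{n-1} x^{q^i}, and let s = ∑_{i=1}^{(n-1)/2} q^{2i}. Then for all A, B ∈ F_{q^n} with A ≠ 0: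 ∑_{w ∈ F_{q^n}} χ(A·w^{q+1} + B·w) = η(A)·G·χ( -λ(A^s·B^q)^{q+1} / (4·N(A)) ). -/
/-!
Since `gcd(q + 1, q^n - 1) = 2`, we can write `q + 1 ≡ 2e (mod q^n - 1)` with `e` prime to
`q^n - 1`; then `w ↦ w^e` is a bijection turning `w^(q+1)` into `w^2`, so
`∑ χ(A w^(q+1)) = ∑ χ(A w^2) = η(A) G`. The general sum reduces to this one by the shift
`w ↦ w + x₀`, where `x₀ = λ(A^s B^q) / (2 A^(s+1))` solves `A^q x₀^(q²) + A x₀ = -B^q`; this rests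
on `λ(y)^(q²) + λ(y) = -2y`, a telescoping sum that closes up because `n` is odd. As `χ` is
invariant under `x ↦ x^q`, the shift kills the terms linear in `w` and leaves the constant
factor `χ(-A x₀^(q+1)) = χ(-λ(A^s B^q)^(q+1) / (4 N(A)))`.
-/

open Finset

namespace Nat

theorem exists_coprime_modEq_gcd_mul (k : ℕ) {N : ℕ} (hN : N ≠ 0) :
    ∃ e, 0 < e ∧ e.Coprime N ∧ k ≡ k.gcd N * e [MOD N] := by
  have : NeZero N := ⟨hN⟩
  set g := k.gcd N
  have hg : 0 < g := Nat.gcd_pos_of_pos_right k (Nat.pos_of_ne_zero hN)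
  have hdvd : N / g ∣ N := Nat.div_dvd_of_dvd (Nat.gcd_dvd_right k N)
  -- lift the unit `k / g` of `ZMod (N / g)` to a unit of `ZMod N`
  obtain ⟨u, hu⟩ := ZMod.unitsMap_surjective hdvd
    (ZMod.unitOfCoprime _ (Nat.coprime_div_gcd_div_gcd hg))
  refine ⟨(u : ZMod N).val + N, by omega,
    Nat.coprime_add_self_left.mpr (ZMod.val_coe_unit_coprime u), ?_⟩
  have hu' : (((u : ZMod N).val + N : ℕ) : ZMod (N / g)) = (k / g : ℕ) := by
    have := congrArg Units.val hu
    rw [ZMod.unitsMap_val, ZMod.coe_unitOfCoprime] at this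
    rw [Nat.cast_add, ZMod.natCast_val, this, (ZMod.natCast_eq_zero_iff _ _).mpr hdvd, add_zero]
  have hmod := ((ZMod.natCast_eq_natCast_iff _ _ _).mp hu').symm.mul_left' g
  rwa [Nat.mul_div_cancel' (Nat.gcd_dvd_left k N), Nat.mul_div_cancel' (Nat.gcd_dvd_right k N)]
    at hmod

theorem gcd_add_one_pow_sub_one {q n : ℕ} (hq : Odd q) (hn : Odd n) :
    (q + 1).gcd (q ^ n - 1) = 2 := by
  have hdvd : q + 1 ∣ q ^ n + 1 := by simpa using hn.nat_add_dvd_pow_add_pow q 1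
  obtain ⟨t, ht⟩ : Odd (q ^ n) := hq.pow
  apply Nat.dvd_antisymm
  · have h : (q + 1).gcd (q ^ n - 1) ∣ (q ^ n + 1) - (q ^ n - 1) :=
      Nat.dvd_sub ((Nat.gcd_dvd_left _ _).trans hdvd) (Nat.gcd_dvd_right _ _)
    rwa [show q ^ n + 1 - (q ^ n - 1) = 2 by omega] at h
  · exact Nat.dvd_gcd (even_iff_two_dvd.mp hq.add_one) ⟨t, by omega⟩

theorem sum_pow_two_mul_add_one_mul_sq (q m : ℕ) :
    (∑ i ∈ range m, q ^ (2 * (i + 1)) + 1) * q ^ 2 =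
      ∑ i ∈ range m, q ^ (2 * (i + 1)) + q ^ (2 * m + 2) := by
  induction m with
  | zero => simp
  | succ m ih =>
    rw [sum_range_succ, add_right_comm, add_mul, ih]
    ring

theorem sum_pow_two_mul_add_one_mul_add_one (q m : ℕ) :
    (∑ i ∈ range m, q ^ (2 * (i + 1)) + 1) * (q + 1) = ∑ j ∈ range (2 * m + 2), q ^ j := by
  induction m with
  | zero => simp [sum_range_succ, add_comm]
  | succ m ih =>
    rw [sum_range_succ _ m, add_right_comm, add_mul, ih,
      show 2 * (m + 1) + 2 = 2 * m + 2 + 1 + 1 by ring, sum_range_succ _ (2 * m + 2 + 1),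
      sum_range_succ _ (2 * m + 2)]
    ring

end Nat

namespace FiniteField

variable {F : Type*} [Field F] [Fintype F]

theorem exists_eq_pow_of_card_eq_pow {p q n : ℕ} [CharP F p] (hn : n ≠ 0)
    (hF : Fintype.card F = q ^ n) : ∃ a, q = p ^ a := by
  obtain ⟨k, hp, hk⟩ := FiniteField.card F p
  obtain ⟨a, -, ha⟩ := (Nat.dvd_prime_pow hp).mp (hk ▸ hF ▸ dvd_pow_self q hn)
  exact ⟨a, ha⟩

theorem pow_injective_of_coprime {e : ℕ} (he : e ≠ 0) (hcop : e.Coprime (Fintype.card F - 1)) :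
    Function.Injective fun x : F => x ^ e := by
  intro x y hxy
  dsimp only at hxy
  by_cases hy : y = 0
  · subst hy
    rwa [zero_pow he, pow_eq_zero_iff he] at hxy
  have hx : x ≠ 0 := by
    rintro rfl
    rw [zero_pow he, eq_comm, pow_eq_zero_iff he] at hxy
    exact hy hxy
  have h1 : (x / y) ^ e = 1 := by rw [div_pow, hxy, div_self (pow_ne_zero _ hy)]
  have h2 : (x / y) ^ (Fintype.card F - 1) = 1 := pow_card_sub_one_eq_one _ (div_ne_zero hx hy)
  have := pow_gcd_eq_one.mpr ⟨h1, h2⟩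
  rwa [hcop.gcd_eq_one, pow_one, div_eq_one_iff_eq hy] at this

theorem sum_pow_eq_sum_pow_gcd {M : Type*} [AddCommMonoid M] (f : F → M) {k : ℕ} (hk : k ≠ 0) :
    ∑ x, f (x ^ k) = ∑ x, f (x ^ k.gcd (Fintype.card F - 1)) := by
  have hN : Fintype.card F - 1 ≠ 0 := by have := Fintype.one_lt_card (α := F); omega
  obtain ⟨e, he, hcop, hke⟩ := Nat.exists_coprime_modEq_gcd_mul k hN
  have hpow : ∀ x : F, x ^ k = (x ^ e) ^ k.gcd (Fintype.card F - 1) := by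
    intro x
    rw [← pow_mul, mul_comm]
    by_cases hx : x = 0
    · have hg : k.gcd (Fintype.card F - 1) ≠ 0 := (Nat.gcd_pos_of_pos_left _ (by omega)).ne'
      rw [hx, zero_pow hk, zero_pow (mul_ne_zero hg he.ne')]
    · rw [pow_eq_pow_mod _ (pow_card_sub_one_eq_one x hx), hke,
        ← pow_eq_pow_mod _ (pow_card_sub_one_eq_one x hx)]
  simp_rw [hpow]
  exact Fintype.sum_bijective _ (Finite.injective_iff_bijective.mp
    (pow_injective_of_coprime he.ne' hcop)) _ _ fun _ => rfl

end FiniteField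

section QuadraticGaussSum

variable {F : Type*} [Field F] [Fintype F] [DecidableEq F]

theorem apply_eq_quadraticChar {R : Type*} [Ring R] {η : F → R} (h0 : η 0 = 0)
    (hsq : ∀ x : F, x ≠ 0 → (∃ y, y ^ 2 = x) → η x = 1)
    (hnsq : ∀ x : F, x ≠ 0 → ¬(∃ y, y ^ 2 = x) → η x = -1) (x : F) :
    η x = quadraticChar F x := by
  have hsq_iff : (∃ y, y ^ 2 = x) ↔ IsSquare x := by
    simp only [IsSquare, sq, eq_comm]
  rcases eq_or_ne x 0 with rfl | hx
  · simp [h0]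
  by_cases h : IsSquare x
  · simp [hsq x hx (hsq_iff.mpr h), (quadraticChar_one_iff_isSquare hx).mpr h]
  · simp [hnsq x hx (hsq_iff.not.mpr h), quadraticChar_neg_one_iff_not_isSquare.mpr h]

theorem AddChar.sum_mul_sq_eq_quadraticChar_mul_gaussSum {R : Type*} [CommRing R] [IsDomain R]
    (hF : ringChar F ≠ 2) {ψ : AddChar F R} (hψ : ψ.IsPrimitive) {a : F} (ha : a ≠ 0) :
    ∑ x, ψ (a * x ^ 2) =
      quadraticChar F a * gaussSum ((quadraticChar F).ringHomComp (Int.castRingHom R)) ψ := by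
  set χ := (quadraticChar F).ringHomComp (Int.castRingHom R)
  have hcount : ∀ c : F, (#{x : F | x ^ 2 = c} : R) = χ c + 1 := fun c => by
    have := quadraticChar_card_sqrts hF c
    rw [Set.toFinset_ofPred] at this
    rw [MulChar.ringHomComp_apply, eq_intCast, ← Int.cast_natCast, this, Int.cast_add,
      Int.cast_one]
  have hχa : χ a * χ a = 1 := by
    rw [MulChar.ringHomComp_apply, ← map_mul, ← sq, quadraticChar_sq_one ha, map_one]
  calc ∑ x, ψ (a * x ^ 2) = ∑ c, (#{x : F | x ^ 2 = c} : R) * ψ (a * c) := by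
        rw [← sum_fiberwise' univ (· ^ 2) fun c => ψ (a * c)]
        simp [sum_const]
    _ = gaussSum χ (mulShift ψ a) + ∑ c, ψ (c * a) := by
        rw [gaussSum, ← sum_add_distrib]
        refine sum_congr rfl fun c _ => ?_
        rw [hcount, mulShift_apply, mul_comm c a]
        ring
    _ = χ a * gaussSum χ ψ := by
        rw [sum_mulShift a hψ, if_neg ha, Nat.cast_zero, add_zero,
          ← gaussSum_mulShift χ ψ (Units.mk0 a ha), Units.val_mk0, ← mul_assoc, hχa, one_mul]

end QuadraticGaussSum

theorem AddChar.sum_mul_mul_map_add_mul_eq {R M : Type*} [CommRing R] [Fintype R]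
    [CommSemiring M] (ψ : AddChar R M) (σ : R ≃+* R) (hψσ : ∀ x, ψ (σ x) = ψ x) {A B x₀ : R}
    (hx₀ : A * x₀ + σ (A * σ x₀ + B) = 0) :
    ∑ w, ψ (A * w * σ w + B * w) = ψ (-(A * x₀ * σ x₀)) * ∑ w, ψ (A * w * σ w) := by
  set c := σ.symm (A * x₀)
  have hc : σ c = A * x₀ := σ.apply_symm_apply _
  have hB : B = -c - A * σ x₀ := by
    rw [← hc, ← map_add, map_eq_zero_iff σ σ.injective] at hx₀
    linear_combination hx₀
  -- after the shift the part linear in `w` is `σ (c w) - c w`, on which `ψ` is trivial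
  have hterm : ∀ w, A * (w + x₀) * σ (w + x₀) + B * (w + x₀) =
      A * w * σ w + (σ (c * w) + -(c * w)) + -(c * x₀) := fun w => by
    rw [map_mul, map_add, hc, hB]
    ring
  have hconst : ψ (-(c * x₀)) = ψ (-(A * x₀ * σ x₀)) := by
    rw [← hψσ, map_neg, map_mul, hc]
  rw [← Equiv.sum_comp (Equiv.addRight x₀), mul_sum]
  refine sum_congr rfl fun w _ => ?_
  rw [Equiv.coe_addRight, hterm, map_add_eq_mul, map_add_eq_mul, map_add_eq_mul ψ (σ _), hψσ,
    ← map_add_eq_mul, add_neg_cancel, map_zero_eq_one, mul_one, hconst, mul_comm]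

section TraceAddChar

variable (p : ℕ) [NeZero p] (F : Type*) [Field F] [Algebra (ZMod p) F] {C : Type*}
  [CommMonoid C] {ζ : C}

noncomputable def traceAddChar (hζ : ζ ^ p = 1) : AddChar F C :=
  (AddChar.zmodChar p hζ).compAddMonoidHom (Algebra.trace (ZMod p) F).toAddMonoidHom

variable {p F}

theorem traceAddChar_apply (hζ : ζ ^ p = 1) (x : F) :
    traceAddChar p F hζ x = ζ ^ (Algebra.trace (ZMod p) F x).val :=
  rfl

theorem traceAddChar_map_ringEquiv (hζ : ζ ^ p = 1) (σ : F ≃+* F) (x : F) :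
    traceAddChar p F hζ (σ x) = traceAddChar p F hζ x := by
  let σ' : F ≃ₐ[ZMod p] F := AlgEquiv.ofRingEquiv (f := σ) fun r =>
    RingHom.congr_fun (RingHom.ext_zmod ((σ : F →+* F).comp (algebraMap (ZMod p) F)) _) r
  rw [traceAddChar_apply, traceAddChar_apply, ← Algebra.trace_eq_of_algEquiv σ' x]
  rfl

theorem traceAddChar_isPrimitive [Fact p.Prime] [Finite F] (hζ : IsPrimitiveRoot ζ p) :
    (traceAddChar p F hζ.pow_eq_one).IsPrimitive := by
  refine AddChar.IsPrimitive.of_ne_one fun h => ?_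
  obtain ⟨x, hx⟩ := Algebra.trace_surjective (ZMod p) F 1
  have := DFunLike.congr_fun h x
  rw [traceAddChar_apply, hx, ZMod.val_one, pow_one, AddChar.one_apply] at this
  exact hζ.ne_one (Fact.out : p.Prime).one_lt this

end TraceAddChar

section Frobenius

variable {R : Type*} [CommRing R] {p a q : ℕ} [ExpChar R p]

theorem iterateFrobenius_mul_eq_pow_pow (hq : q = p ^ a) (k : ℕ) (x : R) :
    iterateFrobenius R p (a * k) x = x ^ q ^ k := by
  rw [iterateFrobenius_def, hq, pow_mul]

theorem two_pow_pow_eq_two (hq : q = p ^ a) (k : ℕ) : (2 : R) ^ q ^ k = 2 := by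
  rw [← iterateFrobenius_mul_eq_pow_pow hq, map_ofNat]

theorem sum_neg_one_pow_mul_pow_pow_sq_add {m : ℕ} (hq : q = p ^ a)
    (hcard : ∀ x : R, x ^ q ^ (2 * m + 1) = x) (y : R) :
    (∑ i ∈ range (2 * m + 1), (-1) ^ (i + 1) * y ^ q ^ (2 * i)) ^ q ^ 2 +
      ∑ i ∈ range (2 * m + 1), (-1) ^ (i + 1) * y ^ q ^ (2 * i) = -(2 * y) := by
  set g : ℕ → R := fun i => (-1) ^ i * y ^ q ^ (2 * i)
  have hfrob : (∑ i ∈ range (2 * m + 1), (-1) ^ (i + 1) * y ^ q ^ (2 * i)) ^ q ^ 2 =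
      ∑ i ∈ range (2 * m + 1), g (i + 1) := by
    rw [← iterateFrobenius_mul_eq_pow_pow hq, map_sum]
    refine sum_congr rfl fun i _ => ?_
    rw [map_mul, map_pow, map_neg, map_one, iterateFrobenius_mul_eq_pow_pow hq, ← pow_mul,
      ← pow_add]
    simp only [g]
    ring_nf
  have hg : g (2 * m + 1) = -y := by
    simp only [g]
    rw [show q ^ (2 * (2 * m + 1)) = q ^ (2 * m + 1) * q ^ (2 * m + 1) by ring, pow_mul, hcard,
      hcard, (odd_two_mul_add_one m).neg_one_pow, neg_one_mul]
  rw [hfrob, show ∑ i ∈ range (2 * m + 1), (-1) ^ (i + 1) * y ^ q ^ (2 * i) =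
    -∑ i ∈ range (2 * m + 1), g i by simp [g, pow_succ, ← sum_neg_distrib], ← sub_eq_add_neg,
    ← sum_sub_distrib, sum_range_sub, hg]
  simp [g]
  ring

end Frobenius

section NormExponent

variable {M : Type*} [CommMonoid M] {q m : ℕ}

theorem pow_sum_pow_two_mul_add_one_pow_sq (hcard : ∀ x : M, x ^ q ^ (2 * m + 1) = x) (A : M) :
    (A ^ (∑ i ∈ range m, q ^ (2 * (i + 1)) + 1)) ^ q ^ 2 =
      A ^ (∑ i ∈ range m, q ^ (2 * (i + 1))) * A ^ q := by
  rw [← pow_mul, Nat.sum_pow_two_mul_add_one_mul_sq, pow_add,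
    show 2 * m + 2 = (2 * m + 1) + 1 by ring, pow_succ, pow_mul, hcard]

theorem pow_sum_pow_two_mul_add_one_pow_add_one (hcard : ∀ x : M, x ^ q ^ (2 * m + 1) = x)
    (A : M) :
    (A ^ (∑ i ∈ range m, q ^ (2 * (i + 1)) + 1)) ^ (q + 1) =
      (∏ i ∈ range (2 * m + 1), A ^ q ^ i) * A := by
  rw [← pow_mul, Nat.sum_pow_two_mul_add_one_mul_add_one, sum_range_succ, pow_add,
    prod_pow_eq_pow_sum, hcard]

end NormExponent

section CompletingTheSquare

variable {F : Type*} [Field F] {p a q m : ℕ} [ExpChar F p] {A B u : F}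

theorem linearized_eq_zero_of_pow_sq_add_eq (hq : q = p ^ a)
    (hcard : ∀ x : F, x ^ q ^ (2 * m + 1) = x) (h2 : (2 : F) ≠ 0) (hA : A ≠ 0)
    (hu : u ^ q ^ 2 + u = -(2 * (A ^ (∑ i ∈ range m, q ^ (2 * (i + 1))) * B ^ q))) :
    A * (u / (2 * A ^ (∑ i ∈ range m, q ^ (2 * (i + 1)) + 1))) +
      (A * (u / (2 * A ^ (∑ i ∈ range m, q ^ (2 * (i + 1)) + 1))) ^ q + B) ^ q = 0 := by
  set s := ∑ i ∈ range m, q ^ (2 * (i + 1))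
  have hfrob : ∀ x y : F, (x + y) ^ q = x ^ q + y ^ q := fun x y => by
    subst hq; exact add_pow_expChar_pow x y p a
  rw [hfrob, mul_pow, ← pow_mul, ← sq, div_pow, mul_pow, two_pow_pow_eq_two hq,
    pow_sum_pow_two_mul_add_one_pow_sq hcard, pow_succ A]
  have hAs : A ^ s ≠ 0 := pow_ne_zero _ hA
  have hAq : A ^ q ≠ 0 := pow_ne_zero _ hA
  have hx₀ : A * (u / (2 * (A ^ s * A))) = u / (2 * A ^ s) := by field_simp
  have hx₀q : A ^ q * (u ^ q ^ 2 / (2 * (A ^ s * A ^ q))) = u ^ q ^ 2 / (2 * A ^ s) := by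
    field_simp
  rw [hx₀, hx₀q, ← add_assoc, ← add_div, add_comm u, hu]
  field_simp
  ring

theorem neg_mul_mul_pow_eq_neg_pow_div_prod (hq : q = p ^ a)
    (hcard : ∀ x : F, x ^ q ^ (2 * m + 1) = x) (hA : A ≠ 0) :
    -(A * (u / (2 * A ^ (∑ i ∈ range m, q ^ (2 * (i + 1)) + 1))) *
        (u / (2 * A ^ (∑ i ∈ range m, q ^ (2 * (i + 1)) + 1))) ^ q) =
      -u ^ (q + 1) / (4 * ∏ i ∈ range (2 * m + 1), A ^ q ^ i) := by
  have h4 : (2 : F) ^ (q + 1) = 4 := by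
    rw [pow_succ, ← pow_one q, two_pow_pow_eq_two hq]
    norm_num
  rw [mul_assoc, ← pow_succ', div_pow, mul_pow, pow_sum_pow_two_mul_add_one_pow_add_one hcard,
    h4, ← mul_div_assoc,
    show (4 : F) * ((∏ i ∈ range (2 * m + 1), A ^ q ^ i) * A) =
      (4 * ∏ i ∈ range (2 * m + 1), A ^ q ^ i) * A by ring, mul_comm A,
    mul_div_mul_right _ _ hA, neg_div]

end CompletingTheSquare

theorem AddChar.sum_mul_pow_add_mul_eq {F R : Type*} [Field F] [Fintype F] [DecidableEq F]
    [CommRing R] [IsDomain R] {p a q m : ℕ} [ExpChar F p] (hq : q = p ^ a) (hqodd : Odd q)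
    (hF : Fintype.card F = q ^ (2 * m + 1)) {ψ : AddChar F R} (hψ : ψ.IsPrimitive)
    (hψq : ∀ x, ψ (x ^ q) = ψ x) {A : F} (hA : A ≠ 0) (B : F) :
    ∑ w, ψ (A * w ^ (q + 1) + B * w) =
      quadraticChar F A * gaussSum ((quadraticChar F).ringHomComp (Int.castRingHom R)) ψ *
        ψ (-(∑ i ∈ range (2 * m + 1), (-1) ^ (i + 1) *
            (A ^ (∑ i ∈ range m, q ^ (2 * (i + 1))) * B ^ q) ^ q ^ (2 * i)) ^ (q + 1) /
          (4 * ∏ i ∈ range (2 * m + 1), A ^ q ^ i)) := by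
  have hcard : ∀ x : F, x ^ q ^ (2 * m + 1) = x := fun x => hF ▸ FiniteField.pow_card x
  have hchar : ringChar F ≠ 2 := by
    rw [Ne, FiniteField.even_card_iff_char_two, hF, ← Nat.even_iff]
    exact Nat.not_even_iff_odd.mpr hqodd.pow
  set s := ∑ i ∈ range m, q ^ (2 * (i + 1))
  set σ := iterateFrobeniusEquiv F p a
  have hσ : ∀ x, σ x = x ^ q := fun x => by rw [iterateFrobeniusEquiv_def, hq]
  have hpow : ∀ w, A * w ^ (q + 1) = A * w * σ w := fun w => by rw [hσ, pow_succ', mul_assoc]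
  set u := ∑ i ∈ range (2 * m + 1), (-1) ^ (i + 1) * (A ^ s * B ^ q) ^ q ^ (2 * i)
  set x₀ := u / (2 * A ^ (s + 1))
  have hx₀ : A * x₀ + σ (A * σ x₀ + B) = 0 := by
    simp only [hσ]
    exact linearized_eq_zero_of_pow_sq_add_eq hq hcard (Ring.two_ne_zero hchar) hA
      (sum_neg_one_pow_mul_pow_pow_sq_add hq hcard _)
  calc ∑ w, ψ (A * w ^ (q + 1) + B * w)
      = ψ (-(A * x₀ * σ x₀)) * ∑ w, ψ (A * w ^ 2) := by
        simp only [hpow]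
        rw [AddChar.sum_mul_mul_map_add_mul_eq ψ σ (fun x => by rw [hσ, hψq]) hx₀]
        simp only [← hpow]
        rw [FiniteField.sum_pow_eq_sum_pow_gcd (fun y => ψ (A * y)) q.succ_ne_zero, hF,
          Nat.gcd_add_one_pow_sub_one hqodd (odd_two_mul_add_one m)]
    _ = _ := by
        rw [AddChar.sum_mul_sq_eq_quadraticChar_mul_gaussSum hchar hψ hA, hσ,
          neg_mul_mul_pow_eq_neg_pow_div_prod hq hcard hA, mul_comm]

theorem stmt_14_general (q n p : ℕ) (hqodd : Odd q) (hn : Odd n)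
    (F : Type*) [Field F] [Fintype F] [CharP F p] [Algebra (ZMod p) F] (hF : Fintype.card F = q ^ n)
    (ζ : ℂ) (hζ : IsPrimitiveRoot ζ p)
    (χ : F → ℂ) (hχ : ∀ x, χ x = ζ ^ (Algebra.trace (ZMod p) F x).val)
    (η : F → ℂ) (hη0 : η 0 = 0)
    (hη1 : ∀ x : F, x ≠ 0 → (∃ y, y ^ 2 = x) → η x = 1)
    (hη2 : ∀ x : F, x ≠ 0 → ¬(∃ y, y ^ 2 = x) → η x = -1)
    (G : ℂ) (hG : G = ∑ x : F, η x * χ x)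
    (lam : F → F)
    (hlam : ∀ x, lam x = ∑ i ∈ Finset.range n, (-1) ^ (i + 1) * x ^ q ^ (2 * i))
    (s : ℕ) (hs : s = ∑ i ∈ Finset.range ((n - 1) / 2), q ^ (2 * (i + 1))) :
    ∀ A B : F, A ≠ 0 →
      ∑ w : F, χ (A * w ^ (q + 1) + B * w) =
        η A * G *
          χ (-(lam (A ^ s * B ^ q)) ^ (q + 1) /
            (4 * ∏ i ∈ Finset.range n, A ^ q ^ i)) := by
  classical
  intro A B hA
  obtain ⟨m, rfl⟩ := hn
  have : Fact p.Prime := ⟨CharP.char_is_prime F p⟩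
  obtain ⟨a, hqa⟩ := FiniteField.exists_eq_pow_of_card_eq_pow (p := p) (by omega) hF
  obtain rfl : s = ∑ i ∈ range m, q ^ (2 * (i + 1)) := by rw [hs]; congr; omega
  set ψ := traceAddChar p F hζ.pow_eq_one
  have hχψ : ∀ x, χ x = ψ x := fun x => (hχ x).trans (traceAddChar_apply _ x).symm
  have hψq : ∀ x, ψ (x ^ q) = ψ x := fun x => by
    rw [hqa, ← iterateFrobeniusEquiv_def F p a x, traceAddChar_map_ringEquiv]
  have hGψ : G = gaussSum ((quadraticChar F).ringHomComp (Int.castRingHom ℂ)) ψ := by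
    simp [hG, gaussSum, apply_eq_quadraticChar hη0 hη1 hη2, hχψ]
  rw [hGψ, apply_eq_quadraticChar hη0 hη1 hη2 A, hlam]
  simp only [hχψ]
  exact AddChar.sum_mul_pow_add_mul_eq hqa hqodd hF (traceAddChar_isPrimitive hζ) hψq hA B

/-- Evaluation of the Weil sum `∑_w χ(A·w^{q+1} + B·w)` over `F_{q^n}` for odd
`q` and odd `n`, where `χ` is the canonical additive character, `η` the quadratic character,
`G` the quadratic Gauss sum, `λ(x) = ∑ (-1)^{i+1} x^{q^{2i}}`, `N` the norm and
`s = ∑_{i=1}^{(n-1)/2} q^{2i}`. -/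
theorem stmt_14 (q n p : ℕ) (hq : IsPrimePow q) (hqodd : Odd q) (hn : Odd n)
    (hp : p.Prime)
    (F : Type*) [Field F] [Fintype F] [CharP F p] [Algebra (ZMod p) F] (hF : Fintype.card F = q ^ n)
    (ζ : ℂ) (hζ : IsPrimitiveRoot ζ p)
    (χ : F → ℂ) (hχ : ∀ x, χ x = ζ ^ (Algebra.trace (ZMod p) F x).val)
    (η : F → ℂ) (hη0 : η 0 = 0)
    (hη1 : ∀ x : F, x ≠ 0 → (∃ y, y ^ 2 = x) → η x = 1)
    (hη2 : ∀ x : F, x ≠ 0 → ¬(∃ y, y ^ 2 = x) → η x = -1)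
    (G : ℂ) (hG : G = ∑ x : F, η x * χ x)
    (lam : F → F)
    (hlam : ∀ x, lam x = ∑ i ∈ Finset.range n, (-1) ^ (i + 1) * x ^ q ^ (2 * i))
    (s : ℕ) (hs : s = ∑ i ∈ Finset.range ((n - 1) / 2), q ^ (2 * (i + 1))) :
    ∀ A B : F, A ≠ 0 →
      ∑ w : F, χ (A * w ^ (q + 1) + B * w) =
        η A * G *
          χ (-(lam (A ^ s * B ^ q)) ^ (q + 1) /
            (4 * ∏ i ∈ Finset.range n, A ^ q ^ i)) :=
  stmt_14_general q n p hqodd hn F hF ζ hζ χ hχ η hη0 hη1 hη2 G hG lam hlam s hs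
end
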